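/- arXiv:2101.01961 — 5 statements merged into one kernel-verified Lean document; each statement's English description precedes it below -/
import Mathlib

section
/- Let (A,d) be a connected dga with a weight ω, and let a ∈ A be a cocycle. If ω detects a, i.e. a is ω-homogeneous with ω(a) ≠ 0, then the class [a] ∈ H(A,d) is flexible: for every n ∈ ℤ there exists a dga endomorphism f_n of (A,d) such that H(f_n)([a]) = λ·[a] for some rational number λ ≥ n. -/
/-- A graded-commutative, associative, unital `ℚ`-algebra with an `ℕ`-grading. -/
structure GradedCommAlg where
  carrier : Type
  [ring : Ring carrier]
  [algebra : Algebra ℚ carrier]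
  grading : ℕ → Submodule ℚ carrier
  internal : DirectSum.IsInternal grading
  one_mem : (1 : carrier) ∈ grading 0
  mul_mem : ∀ {i j : ℕ} {x y : carrier}, x ∈ grading i → y ∈ grading j → x * y ∈ grading (i + j)
  gcomm : ∀ {i j : ℕ} {x y : carrier}, x ∈ grading i → y ∈ grading j →
      x * y = ((-1 : ℚ) ^ (i * j)) • (y * x)

attribute [instance] GradedCommAlg.ring GradedCommAlg.algebra

/-- A connected differential graded algebra (dga) over `ℚ`. -/
structure ConnectedDGA extends GradedCommAlg where
  connected : ∀ x ∈ grading 0, ∃ q : ℚ, x = q • (1 : carrier)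
  d : carrier →ₗ[ℚ] carrier
  d_deg : ∀ {k : ℕ} {x : carrier}, x ∈ grading k → d x ∈ grading (k + 1)
  d_sq : ∀ x, d (d x) = 0
  leibniz : ∀ {i : ℕ} {x y : carrier}, x ∈ grading i →
      d (x * y) = d x * y + ((-1 : ℚ) ^ i) • (x * d y)

namespace ConnectedDGA

/-- `x` is a coboundary, i.e. represents `0` in cohomology. -/
def IsCoboundary (A : ConnectedDGA) (x : A.carrier) : Prop := ∃ y, A.d y = x

/-- The (two-sided, by graded-commutativity) ideal generated by a set `S`. -/
def mulIdeal (A : ConnectedDGA) (S : Set A.carrier) : Submodule ℚ A.carrier :=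
  Submodule.span ℚ {x : A.carrier | ∃ r : A.carrier, ∃ s ∈ S, x = r * s}

end ConnectedDGA

/-- A weight on a connected dga: a bigraded decomposition compatible with `d` and products. -/
structure Weight (A : ConnectedDGA) where
  w : ℕ → ℤ → Submodule ℚ A.carrier
  internal : DirectSum.IsInternal (fun p : ℕ × ℤ => w p.1 p.2)
  grading_eq : ∀ k, A.grading k = ⨆ n, w k n
  d_mem : ∀ {k : ℕ} {n : ℤ} {x : A.carrier}, x ∈ w k n → A.d x ∈ w (k + 1) n
  mul_mem : ∀ {k l : ℕ} {n m : ℤ} {x y : A.carrier},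
      x ∈ w k n → y ∈ w l m → x * y ∈ w (k + l) (n + m)

namespace Weight

/-- The weight-`n` part of `A`. An element of `piece n` (nonzero) is `ω`-homogeneous
of weight `n`. -/
def piece {A : ConnectedDGA} (W : Weight A) (n : ℤ) : Submodule ℚ A.carrier := ⨆ k, W.w k n

/-- A weight is positive if the negative pieces vanish and the weight `0` piece is `A^0`. -/
def Positive {A : ConnectedDGA} (W : Weight A) : Prop :=
  (∀ n : ℤ, n < 0 → W.piece n = ⊥) ∧ W.piece 0 = A.grading 0

end Weight

/-- A dga morphism: degree-preserving algebra homomorphism commuting with differentials. -/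
structure Hom (A B : ConnectedDGA) where
  toFun : A.carrier →ₐ[ℚ] B.carrier
  map_grading : ∀ {k : ℕ} {x : A.carrier}, x ∈ A.grading k → toFun x ∈ B.grading k
  map_d : ∀ x, B.d (toFun x) = toFun (A.d x)

/-- `ν` is a representative of the fundamental class of a dga whose cohomology is a
Poincaré duality algebra of formal dimension `N`. -/
structure PoincareDuality (A : ConnectedDGA) (N : ℕ) (ν : A.carrier) : Prop where
  mem : ν ∈ A.grading N
  cocycle : A.d ν = 0
  not_bdry : ¬ A.IsCoboundary ν
  top_vanish : ∀ k : ℕ, N < k → ∀ x ∈ A.grading k, A.d x = 0 → A.IsCoboundary x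
  top_span : ∀ x ∈ A.grading N, A.d x = 0 → ∃ q : ℚ, A.IsCoboundary (x - q • ν)
  nondeg : ∀ k : ℕ, k ≤ N → ∀ x ∈ A.grading k, A.d x = 0 → ¬ A.IsCoboundary x →
      ∃ y ∈ A.grading (N - k), A.d y = 0 ∧ ¬ A.IsCoboundary (x * y)

/-! A weight gives an action of `ℚˣ`: `t` acts on the weight-`n` part by `tⁿ`. Since `d` and the
product respect weights and `1` has weight `0` (by connectedness), this is a dga endomorphism,
and it multiplies `a` by `t ^ ω(a)`. As `ω(a) ≠ 0`, taking `t` large or small makes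
this scalar as large as we like. -/

namespace DirectSum.IsInternal

variable {ι R M : Type*} [DecidableEq ι] [CommSemiring R] [AddCommMonoid M] [Module R M]
  {ℳ : ι → Submodule R M}

noncomputable def diagonal (h : IsInternal ℳ) (c : ι → R) : M →ₗ[R] M :=
  letI := h.chooseDecomposition
  toModule R ι M (fun i => c i • (ℳ i).subtype) ∘ₗ (decomposeLinearEquiv ℳ).toLinearMap

theorem diagonal_apply_of_mem (h : IsInternal ℳ) (c : ι → R) {i : ι} {x : M} (hx : x ∈ ℳ i) :
    h.diagonal c x = c i • x := by
  let := h.chooseDecomposition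
  simp [diagonal, decomposeLinearEquiv_apply_coe ℳ i ⟨x, hx⟩]

theorem linearMap_ext {N : Type*} [AddCommMonoid N] [Module R N] (h : IsInternal ℳ)
    {f g : M →ₗ[R] N} (hfg : ∀ i, ∀ x ∈ ℳ i, f x = g x) : f = g :=
  letI := h.chooseDecomposition
  decompose_lhom_ext ℳ fun i => LinearMap.ext fun x => hfg i x x.2

theorem eq_of_mem_of_mem (h : IsInternal ℳ) {i j : ι} {x : M} (hi : x ∈ ℳ i) (hj : x ∈ ℳ j)
    (hx : x ≠ 0) : i = j :=
  letI := h.chooseDecomposition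
  degree_eq_of_mem_mem ℳ hi hj hx

theorem map_mul_of_forall_mem {A B : Type*} [Semiring A] [Algebra R A] [Semiring B]
    [Algebra R B] {ℳ : ι → Submodule R A} (h : IsInternal ℳ) {f : A →ₗ[R] B}
    (hf : ∀ i j, ∀ x ∈ ℳ i, ∀ y ∈ ℳ j, f (x * y) = f x * f y) (x y : A) :
    f (x * y) = f x * f y :=
  LinearMap.congr_fun₂ (f := (LinearMap.mul R A).compr₂ f) (g := (LinearMap.mul R B).compl₁₂ f f)
    (h.linearMap_ext fun i x hx => h.linearMap_ext fun j y hy => hf i j x hx y hy) x y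

end DirectSum.IsInternal

theorem exists_ne_zero_le_zpow {K : Type*} [Field K] [LinearOrder K] [IsStrictOrderedRing K]
    {m : ℤ} (hm : m ≠ 0) (x : K) : ∃ t : K, t ≠ 0 ∧ x ≤ t ^ m := by
  set M := max x 1
  have hM : 1 ≤ M := le_max_right x 1
  have hle : ∀ k : ℤ, 0 < k → x ≤ M ^ k := fun k hk =>
    calc x ≤ M := le_max_left x 1
      _ = M ^ (1 : ℤ) := (zpow_one M).symm
      _ ≤ M ^ k := zpow_le_zpow_right₀ hM hk
  rcases hm.lt_or_gt with hneg | hpos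
  · exact ⟨M⁻¹, inv_ne_zero (by positivity), by rw [inv_zpow']; exact hle (-m) (by omega)⟩
  · exact ⟨M, by positivity, hle m hpos⟩

namespace Weight

variable {A : ConnectedDGA} (W : Weight A)

theorem one_mem_w_zero_zero : (1 : A.carrier) ∈ W.w 0 0 := by
  by_cases h1 : (1 : A.carrier) = 0
  · rw [h1]
    exact zero_mem _
  obtain ⟨n, hn⟩ : ∃ n, (1 : A.carrier) ∈ W.w 0 n := by
    have hsup : (⨆ n, W.w 0 n) ≠ ⊥ := by
      rw [← W.grading_eq, Submodule.ne_bot_iff]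
      exact ⟨1, A.one_mem, h1⟩
    obtain ⟨n, hn⟩ := not_forall.mp (mt iSup_eq_bot.mpr hsup)
    obtain ⟨y, hy, hy0⟩ := (Submodule.ne_bot_iff _).mp hn
    obtain ⟨q, rfl⟩ := A.connected y (W.grading_eq 0 ▸ Submodule.mem_iSup_of_mem n hy)
    have hq : q ≠ 0 := by
      rintro rfl
      simp at hy0
    refine ⟨n, ?_⟩
    simpa [smul_smul, inv_mul_cancel₀ hq] using Submodule.smul_mem _ q⁻¹ hy
  -- `1 = 1 * 1` has weights `n` and `n + n`, which forces `n = 0`.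
  have hnn : (1 : A.carrier) ∈ W.w 0 (n + n) := by simpa using W.mul_mem hn hn
  obtain rfl : n = 0 := by
    have := W.internal.eq_of_mem_of_mem (i := (0, n)) (j := (0, n + n)) hn hnn h1
    simp only [Prod.mk.injEq, true_and] at this
    omega
  exact hn

noncomputable def scale (t : ℚ) : A.carrier →ₗ[ℚ] A.carrier :=
  W.internal.diagonal fun p => t ^ p.2

variable {W}

theorem scale_apply_of_mem_w (t : ℚ) {k : ℕ} {n : ℤ} {x : A.carrier} (hx : x ∈ W.w k n) :
    W.scale t x = t ^ n • x :=
  W.internal.diagonal_apply_of_mem _ (i := (k, n)) hx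

theorem scale_apply_of_mem_piece (t : ℚ) {n : ℤ} {x : A.carrier} (hx : x ∈ W.piece n) :
    W.scale t x = t ^ n • x :=
  (iSup_le fun _ _ hy => scale_apply_of_mem_w t hy :
    W.piece n ≤ LinearMap.eqLocus (W.scale t) (t ^ n • LinearMap.id)) hx

theorem scale_mem_grading (t : ℚ) {k : ℕ} {x : A.carrier} (hx : x ∈ A.grading k) :
    W.scale t x ∈ A.grading k := by
  rw [W.grading_eq] at hx ⊢
  refine (iSup_le fun n y hy => ?_ : ⨆ n, W.w k n ≤ (⨆ n, W.w k n).comap (W.scale t)) hx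
  rw [Submodule.mem_comap, scale_apply_of_mem_w t hy]
  exact Submodule.mem_iSup_of_mem n (Submodule.smul_mem _ _ hy)

theorem scale_d (t : ℚ) (x : A.carrier) : A.d (W.scale t x) = W.scale t (A.d x) :=
  LinearMap.congr_fun (W.internal.linearMap_ext (f := A.d ∘ₗ W.scale t)
    (g := W.scale t ∘ₗ A.d) fun _ _ hy => by
      simp [scale_apply_of_mem_w t hy, scale_apply_of_mem_w t (W.d_mem hy)]) x

theorem scale_one (t : ℚ) : W.scale t 1 = 1 := by
  rw [scale_apply_of_mem_w t W.one_mem_w_zero_zero, zpow_zero, one_smul]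

theorem scale_mul {t : ℚ} (ht : t ≠ 0) (x y : A.carrier) :
    W.scale t (x * y) = W.scale t x * W.scale t y :=
  W.internal.map_mul_of_forall_mem (fun _ _ _ hx _ hy => by
    rw [scale_apply_of_mem_w t hx, scale_apply_of_mem_w t hy,
      scale_apply_of_mem_w t (W.mul_mem hx hy), smul_mul_smul_comm, zpow_add₀ ht]) x y

variable (W)

noncomputable def scaleHom {t : ℚ} (ht : t ≠ 0) : Hom A A where
  toFun := AlgHom.ofLinearMap (W.scale t) (scale_one t) (scale_mul ht)
  map_grading := scale_mem_grading t
  map_d := scale_d t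

end Weight

theorem detected_class_is_flexible_general (A : ConnectedDGA) (W : Weight A) (a : A.carrier)
    (n₀ : ℤ) (hn₀ : n₀ ≠ 0) (hmem : a ∈ W.piece n₀) :
    ∀ n : ℤ, ∃ (f : Hom A A) (lam : ℚ), (n : ℚ) ≤ lam ∧
      A.IsCoboundary (f.toFun a - lam • a) := by
  intro n
  obtain ⟨t, ht, hle⟩ := exists_ne_zero_le_zpow hn₀ (n : ℚ)
  refine ⟨W.scaleHom ht, t ^ n₀, hle, 0, ?_⟩
  simp [Weight.scaleHom, Weight.scale_apply_of_mem_piece t hmem]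

/-- if a weight `ω` on a connected dga detects a cocycle `a` (i.e. `a ≠ 0` is
`ω`-homogeneous of nonzero weight) then the class `[a]` is flexible: for every `n ∈ ℤ` there
is a dga endomorphism `f` with `H(f)([a]) = λ[a]` for some rational `λ ≥ n`. -/
theorem detected_class_is_flexible (A : ConnectedDGA) (W : Weight A) (a : A.carrier)
    (hcocycle : A.d a = 0) (hne : a ≠ 0) (n₀ : ℤ) (hn₀ : n₀ ≠ 0) (hmem : a ∈ W.piece n₀) :
    ∀ n : ℤ, ∃ (f : Hom A A) (lam : ℚ), (n : ℚ) ≤ lam ∧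
      A.IsCoboundary (f.toFun a - lam • a) :=
  detected_class_is_flexible_general A W a n₀ hn₀ hmem
end

section
/- Let (A,d) be a connected dga whose cohomology is a Poincaré duality algebra of formal dimension N, with fundamental class [ν]. If (A,d) has a weight ω that detects some cocycle representative ν of the fundamental class, then the set of degrees of dga endomorphisms of (A,d) is unbounded: for every n ∈ ℤ there exists a dga endomorphism f of (A,d) with deg(f) ≥ n. -/
namespace WeightScaling

open DirectSum

variable {A : ConnectedDGA} (W : Weight A)

/-- The bigraded pieces indexed by `ℕ × ℤ`. -/
abbrev Wp (W : Weight A) : ℕ × ℤ → Submodule ℚ A.carrier := fun p => W.w p.1 p.2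

/-- The decomposition equivalence coming from internality of the weight bigrading. -/
noncomputable def decompEquiv : (⨁ p, Wp W p) ≃ₗ[ℚ] A.carrier :=
  LinearEquiv.ofBijective (DirectSum.coeLinearMap (Wp W)) W.internal

/-- The linear map scaling the `(k, n)`-component by `c ^ n`. -/
noncomputable def scaleL (c : ℚ) : A.carrier →ₗ[ℚ] A.carrier :=
  (decompEquiv W).toLinearMap ∘ₗ
    (DirectSum.toModule ℚ _ _ (fun p => (c ^ p.2 : ℚ) • (DirectSum.lof ℚ (ℕ × ℤ) (fun p => ↥(Wp W p)) p))) ∘ₗ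
    (decompEquiv W).symm.toLinearMap

theorem scaleL_homog (c : ℚ) {k : ℕ} {n : ℤ} {x : A.carrier} (hx : x ∈ W.w k n) :
    scaleL W c x = (c ^ n : ℚ) • x := by
  have hx' : x ∈ Wp W (k, n) := hx
  have h1 : (decompEquiv W).symm x = DirectSum.lof ℚ (ℕ × ℤ) (fun p => ↥(Wp W p)) (k, n) ⟨x, hx'⟩ := by
    apply (decompEquiv W).injective
    simp only [LinearEquiv.apply_symm_apply]
    show x = DirectSum.coeLinearMap (Wp W) _
    rw [DirectSum.lof_eq_of, DirectSum.coeLinearMap_of]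
  show (decompEquiv W) (DirectSum.toModule ℚ _ _ _ ((decompEquiv W).symm x)) = _
  rw [h1, DirectSum.toModule_lof]
  simp only [LinearMap.smul_apply, map_smul]
  congr 1
  show DirectSum.coeLinearMap (Wp W) _ = x
  rw [DirectSum.lof_eq_of, DirectSum.coeLinearMap_of]

theorem scaleL_piece (c : ℚ) {n : ℤ} {x : A.carrier} (hx : x ∈ W.piece n) :
    scaleL W c x = (c ^ n : ℚ) • x := by
  refine Submodule.iSup_induction (x := x) (fun k => W.w k n) hx
    (fun k y hy => scaleL_homog W c hy) (by simp) ?_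
  intro y z hy hz
  rw [map_add, hy, hz, smul_add]

theorem one_mem_w00 (h1ne : (1 : A.carrier) ≠ 0) : (1 : A.carrier) ∈ W.w 0 0 := by
  -- first, find some n₁ with 1 ∈ W.w 0 n₁
  have hsub : ∀ n : ℤ, ∀ x ∈ W.w 0 n, ∃ q : ℚ, x = q • (1 : A.carrier) := by
    intro n x hx
    exact A.connected x ((W.grading_eq 0 ▸ le_iSup (fun m => W.w 0 m) n) hx)
  have h1g : (1 : A.carrier) ∈ ⨆ n, W.w 0 n := W.grading_eq 0 ▸ A.one_mem
  have hex : ∃ n₁ : ℤ, (1 : A.carrier) ∈ W.w 0 n₁ := by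
    by_contra hc
    push_neg at hc
    have hbot : ∀ n : ℤ, W.w 0 n ≤ ⊥ := by
      intro n x hx
      obtain ⟨q, rfl⟩ := hsub n x hx
      rcases eq_or_ne q 0 with h | h
      · simp [h]
      · exact absurd (by simpa [smul_smul, inv_mul_cancel₀ h] using
          Submodule.smul_mem _ q⁻¹ hx) (hc n)
    exact absurd (Submodule.mem_bot ℚ |>.mp ((iSup_le hbot) h1g)) h1ne
  obtain ⟨n₁, hn₁⟩ := hex
  -- next, 1 = 1 * 1 ∈ W.w 0 (n₁ + n₁), and by independence n₁ = n₁ + n₁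
  have hmul : (1 : A.carrier) ∈ W.w 0 (n₁ + n₁) := by
    simpa using W.mul_mem hn₁ hn₁
  have hind := W.internal.submodule_iSupIndep
  rcases eq_or_ne n₁ 0 with h | h
  · exact h ▸ hn₁
  · exfalso
    have hne : ((0, n₁) : ℕ × ℤ) ≠ (0, n₁ + n₁) := by
      intro hEq
      have : n₁ = n₁ + n₁ := congrArg Prod.snd hEq
      omega
    have hdisj : Disjoint (Wp W (0, n₁)) (Wp W (0, n₁ + n₁)) :=
      hind.pairwiseDisjoint hne
    exact h1ne (Submodule.disjoint_def.mp hdisj 1 hn₁ hmul)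

theorem scaleL_one (c : ℚ) (h1ne : (1 : A.carrier) ≠ 0) : scaleL W c 1 = 1 := by
  rw [scaleL_homog W c (one_mem_w00 W h1ne)]
  simp

theorem scaleL_mul (c : ℚ) (hc : c ≠ 0) (x y : A.carrier) :
    scaleL W c (x * y) = scaleL W c x * scaleL W c y := by
  have hx : x ∈ ⨆ p, Wp W p := by
    rw [W.internal.submodule_iSup_eq_top]; trivial
  refine Submodule.iSup_induction (x := x) (Wp W) hx ?_ (by simp) ?_
  · intro p a ha
    have hy : y ∈ ⨆ p, Wp W p := by
      rw [W.internal.submodule_iSup_eq_top]; trivial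
    refine Submodule.iSup_induction (x := y) (Wp W) hy ?_ (by simp) ?_
    · intro q b hb
      rw [scaleL_homog W c ha, scaleL_homog W c hb,
        scaleL_homog W c (W.mul_mem ha hb), smul_mul_assoc, mul_smul_comm, smul_smul,
        ← zpow_add₀ hc]
    · intro u v hu hv
      rw [mul_add, map_add, hu, hv, map_add, mul_add]
  · intro u v hu hv
    rw [add_mul, map_add, hu, hv, map_add, add_mul]

theorem scaleL_grading (c : ℚ) {k : ℕ} {x : A.carrier} (hx : x ∈ A.grading k) :
    scaleL W c x ∈ A.grading k := by
  rw [W.grading_eq k] at hx ⊢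
  refine Submodule.iSup_induction (x := x) (fun n => W.w k n) hx ?_ (by simp) ?_
  · intro n y hy
    rw [scaleL_homog W c hy]
    exact (le_iSup (fun m => W.w k m) n) (Submodule.smul_mem _ _ hy)
  · intro u v hu hv
    rw [map_add]; exact Submodule.add_mem _ hu hv

theorem scaleL_d (c : ℚ) (x : A.carrier) :
    A.d (scaleL W c x) = scaleL W c (A.d x) := by
  have hx : x ∈ ⨆ p, Wp W p := by
    rw [W.internal.submodule_iSup_eq_top]; trivial
  refine Submodule.iSup_induction (x := x) (Wp W) hx ?_ (by simp) ?_
  · intro p a ha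
    rw [scaleL_homog W c ha, map_smul, scaleL_homog W c (W.d_mem ha)]
  · intro u v hu hv
    rw [map_add, map_add, hu, hv, map_add, map_add]

/-- The weight scaling dga endomorphism. -/
noncomputable def scaleHom (c : ℚ) (hc : c ≠ 0) (h1ne : (1 : A.carrier) ≠ 0) : Hom A A where
  toFun := AlgHom.ofLinearMap (scaleL W c) (scaleL_one W c h1ne) (scaleL_mul W c hc)
  map_grading := fun hx => scaleL_grading W c hx
  map_d := fun x => scaleL_d W c x

end WeightScaling

/-- if a connected dga with Poincaré duality cohomology of formal dimension `N`
has a weight detecting a representative `ν` of the fundamental class, then the degrees of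
dga endomorphisms are unbounded: for every `n ∈ ℤ` there is an endomorphism `f` with
`H(f)([ν]) = q[ν]`, `q ≥ n`. -/
theorem detected_fundamental_class_gives_unbounded_degrees (A : ConnectedDGA) (N : ℕ)
    (ν : A.carrier) (hPD : PoincareDuality A N ν) (W : Weight A)
    (hν_ne : ν ≠ 0) (n₀ : ℤ) (hn₀ : n₀ ≠ 0) (hmem : ν ∈ W.piece n₀) :
    ∀ n : ℤ, ∃ (f : Hom A A) (q : ℚ), (n : ℚ) ≤ q ∧
      A.IsCoboundary (f.toFun ν - q • ν) := by
  intro n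
  have h1ne : (1 : A.carrier) ≠ 0 := by
    intro h
    exact hν_ne (by rw [← mul_one ν, h, mul_zero])
  -- choose the base scalar
  set b : ℚ := ((max n 1 : ℤ) : ℚ) with hb_def
  have hb1 : (1 : ℚ) ≤ b := by
    rw [hb_def]
    exact_mod_cast le_max_right n 1
  have hb0 : b ≠ 0 := by positivity
  set c : ℚ := if 0 < n₀ then b else b⁻¹ with hc_def
  have hc0 : c ≠ 0 := by
    rw [hc_def]; split <;> simp [hb0]
  refine ⟨WeightScaling.scaleHom W c hc0 h1ne, c ^ n₀, ?_, ?_⟩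
  · -- the degree bound
    have hnb : (n : ℚ) ≤ b := by
      rw [hb_def]; exact_mod_cast le_max_left n 1
    have key : b ≤ c ^ n₀ := by
      rcases lt_or_ge 0 n₀ with h | h
      · have : c ^ n₀ = b ^ n₀.toNat := by
          rw [hc_def, if_pos h, ← zpow_natCast, Int.toNat_of_nonneg h.le]
        rw [this]
        exact le_self_pow₀ hb1 (by omega)
      · have hneg : n₀ < 0 := lt_of_le_of_ne h hn₀
        have : c ^ n₀ = b ^ (-n₀).toNat := by
          rw [hc_def, if_neg (not_lt.mpr h), inv_zpow, ← zpow_neg, ← zpow_natCast,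
            Int.toNat_of_nonneg (by omega : (0:ℤ) ≤ -n₀)]
        rw [this]
        exact le_self_pow₀ hb1 (by omega)
    exact hnb.trans key
  · -- f ν = c ^ n₀ • ν, so the difference is 0 = d 0
    have hfν : (WeightScaling.scaleHom W c hc0 h1ne).toFun ν = (c ^ n₀ : ℚ) • ν := by
      show WeightScaling.scaleL W c ν = _
      exact WeightScaling.scaleL_piece W c hmem
    exact ⟨0, by rw [map_zero, hfν, sub_self]⟩
end

section
/- Let (A,d) be a simply-connected dga of finite type and let [ν] ∈ H^N(A,d) be a nonzero cohomology class with N ≥ 4. Then there exist a dga (Ā,d) whose cohomology is a Poincaré duality algebra of formal dimension N and a dga morphism q : (A,d) → (Ā,d) such that H^N(q)([ν]) ≠ 0; in particular H^N(q)([ν]) is a nonzero multiple of the fundamental class of H^N(Ā,d). -/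
/-!
Since `[ν] ≠ 0`, there is a linear form `φ` on `A`, supported in degree `N`, vanishing on
coboundaries, with `φ ν = 1`. The elements `x` with `φ (x * A) = 0` and `φ (d x * A) = 0` form a
graded differential ideal `I`, and in `A / I` the pairing `(x, y) ↦ φ (x * y)` becomes nondegenerate
on cohomology: if a cocycle `x` of degree `k ≥ 1` pairs trivially with every cocycle of degree
`N - k`, then, `A^(k-1)` being finite-dimensional, the form `φ (x * ·)` on `A^(N-k)` equals
`φ (z * d ·)` for some `z ∈ A^(k-1)`, and the Leibniz rule shows `x ≡ ± d z` modulo `I`. In degree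
`N` every `x` is congruent to `φ x • ν`, so `A / I` has Poincaré duality cohomology with
fundamental class the image of `ν`.
-/

theorem LinearMap.mem_range_of_iInf_ker_le_ker {K U V : Type*} [Field K] [AddCommGroup U]
    [Module K U] [FiniteDimensional K U] [AddCommGroup V] [Module K V]
    {Λ : U →ₗ[K] Module.Dual K V} {f : Module.Dual K V}
    (h : ⨅ u, LinearMap.ker (Λ u) ≤ LinearMap.ker f) : f ∈ LinearMap.range Λ := by
  rw [← Subspace.dualCoannihilator_dualAnnihilator_eq (W := LinearMap.range Λ),
    Submodule.mem_dualAnnihilator]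
  intro v hv
  rw [Submodule.mem_dualCoannihilator] at hv
  exact h (Submodule.mem_iInf _ |>.2 fun u => hv _ ⟨u, rfl⟩)

namespace ConnectedDGA

variable {A : ConnectedDGA}

variable (A) in
noncomputable def proj (k : ℕ) : A.carrier →ₗ[ℚ] A.carrier :=
  letI := A.internal.chooseDecomposition
  (A.grading k).subtype ∘ₗ DirectSum.component ℚ ℕ (fun i => A.grading i) k ∘ₗ
    (DirectSum.decomposeLinearEquiv A.grading).toLinearMap

theorem proj_mem (k : ℕ) (x : A.carrier) : A.proj k x ∈ A.grading k :=
  Submodule.coe_mem _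

theorem proj_of_mem {k : ℕ} {x : A.carrier} (hx : x ∈ A.grading k) : A.proj k x = x :=
  letI := A.internal.chooseDecomposition
  DirectSum.decompose_of_mem_same A.grading hx

theorem proj_of_mem_of_ne {j k : ℕ} {x : A.carrier} (hx : x ∈ A.grading j) (hjk : j ≠ k) :
    A.proj k x = 0 :=
  letI := A.internal.chooseDecomposition
  DirectSum.decompose_of_mem_ne A.grading hx hjk

@[elab_as_elim]
theorem induction_on_homogeneous {p : A.carrier → Prop} (x : A.carrier) (zero : p 0)
    (add : ∀ a b, p a → p b → p (a + b)) (mem : ∀ k, ∀ a ∈ A.grading k, p a) : p x :=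
  letI := A.internal.chooseDecomposition
  DirectSum.Decomposition.inductionOn A.grading zero (fun a => mem _ a a.2) add x

@[elab_as_elim]
theorem induction_on_proj {p : A.carrier → Prop} (x : A.carrier) (zero : p 0)
    (add : ∀ a b, p a → p b → p (a + b)) (proj : ∀ k, p (A.proj k x)) : p x := by
  classical
  let _ := A.internal.chooseDecomposition
  rw [← DirectSum.sum_support_decompose A.grading x]
  exact Finset.sum_induction _ p add zero fun k _ => proj k

theorem proj_succ_d (k : ℕ) (x : A.carrier) : A.proj (k + 1) (A.d x) = A.d (A.proj k x) := by
  induction x using induction_on_homogeneous with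
  | zero => simp
  | add a b ha hb => simp only [map_add, ha, hb]
  | mem j a ha =>
    rcases eq_or_ne j k with rfl | hjk
    · rw [proj_of_mem ha, proj_of_mem (A.d_deg ha)]
    · rw [proj_of_mem_of_ne ha hjk, proj_of_mem_of_ne (A.d_deg ha) (by omega), map_zero]

theorem proj_zero_d (x : A.carrier) : A.proj 0 (A.d x) = 0 := by
  induction x using induction_on_homogeneous with
  | zero => simp
  | add a b ha hb => simp only [map_add, ha, hb, add_zero]
  | mem j a ha => exact proj_of_mem_of_ne (A.d_deg ha) (by omega)

structure DGIdeal (A : ConnectedDGA) where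
  toSubmodule : Submodule ℚ A.carrier
  mul_mem_left : ∀ (z : A.carrier) {x : A.carrier}, x ∈ toSubmodule → z * x ∈ toSubmodule
  mul_mem_right : ∀ (z : A.carrier) {x : A.carrier}, x ∈ toSubmodule → x * z ∈ toSubmodule
  d_mem : ∀ {x : A.carrier}, x ∈ toSubmodule → A.d x ∈ toSubmodule
  proj_mem : ∀ (k : ℕ) {x : A.carrier}, x ∈ toSubmodule → A.proj k x ∈ toSubmodule

namespace DGIdeal

variable (I : DGIdeal A)

def ringCon : RingCon A.carrier :=
  (TwoSidedIdeal.mk' I.toSubmodule I.toSubmodule.zero_mem I.toSubmodule.add_mem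
    I.toSubmodule.neg_mem (I.mul_mem_left _) (I.mul_mem_right _)).ringCon

def mkₐ : A.carrier →ₐ[ℚ] I.ringCon.Quotient := I.ringCon.mkₐ ℚ

theorem mkₐ_surjective : Function.Surjective I.mkₐ := I.ringCon.mkₐ_surjective (α := ℚ)

theorem mkₐ_eq_mkₐ_iff {a b : A.carrier} : I.mkₐ a = I.mkₐ b ↔ a - b ∈ I.toSubmodule := by
  rw [mkₐ, RingCon.mkₐ_apply, RingCon.mkₐ_apply, RingCon.eq, ringCon, TwoSidedIdeal.rel_iff,
    TwoSidedIdeal.mem_mk']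
  rfl

theorem mkₐ_eq_zero_iff {a : A.carrier} : I.mkₐ a = 0 ↔ a ∈ I.toSubmodule := by
  rw [← map_zero I.mkₐ, mkₐ_eq_mkₐ_iff, sub_zero]

def d : I.ringCon.Quotient →ₗ[ℚ] I.ringCon.Quotient where
  toFun := Quot.lift (fun a => I.mkₐ (A.d a)) fun a b hab => by
    rw [mkₐ_eq_mkₐ_iff, ← map_sub]
    exact I.d_mem ((I.mkₐ_eq_mkₐ_iff).1 (Quot.sound hab))
  map_add' x y := by
    induction x using Quot.ind
    induction y using Quot.ind
    exact congrArg I.mkₐ (map_add A.d _ _)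
  map_smul' r x := by
    induction x using Quot.ind
    exact congrArg I.mkₐ (map_smul A.d r _)

theorem d_mkₐ (a : A.carrier) : I.d (I.mkₐ a) = I.mkₐ (A.d a) := rfl

theorem isInternal_map_grading :
    DirectSum.IsInternal fun k => (A.grading k).map I.mkₐ.toLinearMap := by
  rw [DirectSum.isInternal_submodule_iff_iSupIndep_and_iSup_eq_top]
  constructor
  · intro k
    rw [Submodule.disjoint_def]
    rintro _ ⟨a, ha, rfl⟩ hrest
    have hmap : (⨆ j, ⨆ (_ : j ≠ k), (A.grading j).map I.mkₐ.toLinearMap) =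
        (⨆ j, ⨆ (_ : j ≠ k), A.grading j).map I.mkₐ.toLinearMap := by
      simp only [Submodule.map_iSup]
    rw [hmap] at hrest
    obtain ⟨b, hb, hba⟩ := hrest
    have hle : (⨆ j, ⨆ (_ : j ≠ k), A.grading j) ≤ LinearMap.ker (A.proj k) :=
      iSup₂_le fun j hj x hx => proj_of_mem_of_ne hx hj
    have hproj : A.proj k b = 0 := hle hb
    have hab := I.proj_mem k ((I.mkₐ_eq_mkₐ_iff).1 hba)
    rw [map_sub, proj_of_mem ha, hproj, zero_sub] at hab
    exact (I.mkₐ_eq_zero_iff).2 (by simpa using I.toSubmodule.neg_mem hab)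
  · rw [← Submodule.map_iSup, A.internal.submodule_iSup_eq_top, Submodule.map_top,
      LinearMap.range_eq_top.2 I.mkₐ_surjective]

noncomputable def quotient : ConnectedDGA where
  carrier := I.ringCon.Quotient
  grading k := (A.grading k).map I.mkₐ.toLinearMap
  internal := I.isInternal_map_grading
  one_mem := ⟨1, A.one_mem, map_one I.mkₐ⟩
  mul_mem := by
    rintro i j _ _ ⟨a, ha, rfl⟩ ⟨b, hb, rfl⟩
    exact ⟨a * b, A.mul_mem ha hb, map_mul I.mkₐ a b⟩
  gcomm := by
    rintro i j _ _ ⟨a, ha, rfl⟩ ⟨b, hb, rfl⟩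
    simp only [AlgHom.toLinearMap_apply, ← map_mul, A.gcomm ha hb, map_smul]
  connected := by
    rintro _ ⟨a, ha, rfl⟩
    obtain ⟨q, rfl⟩ := A.connected a ha
    exact ⟨q, by simp⟩
  d := I.d
  d_deg := by
    rintro k _ ⟨a, ha, rfl⟩
    exact ⟨A.d a, A.d_deg ha, rfl⟩
  d_sq x := by
    obtain ⟨a, rfl⟩ := I.mkₐ_surjective x
    rw [d_mkₐ, d_mkₐ, A.d_sq, map_zero]
  leibniz := by
    rintro i _ y ⟨a, ha, rfl⟩
    obtain ⟨b, rfl⟩ := I.mkₐ_surjective y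
    simp only [AlgHom.toLinearMap_apply, ← map_mul, d_mkₐ, A.leibniz ha, map_add, map_smul]

def mkHom : Hom A I.quotient where
  toFun := I.mkₐ
  map_grading hx := ⟨_, hx, rfl⟩
  map_d _ := rfl

theorem isCoboundary_mkₐ_iff (a : A.carrier) :
    I.quotient.IsCoboundary (I.mkₐ a) ↔ ∃ y, A.d y - a ∈ I.toSubmodule := by
  constructor
  · rintro ⟨y, hy⟩
    obtain ⟨y, rfl⟩ := I.mkₐ_surjective y
    exact ⟨y, (I.mkₐ_eq_mkₐ_iff).1 hy⟩
  · rintro ⟨y, hy⟩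
    exact ⟨I.mkₐ y, (I.mkₐ_eq_mkₐ_iff).2 hy⟩

end DGIdeal

structure DetectingForm (A : ConnectedDGA) (N : ℕ) (ν : A.carrier) where
  φ : A.carrier →ₗ[ℚ] ℚ
  eq_zero_of_mem_grading : ∀ ⦃k : ℕ⦄, k ≠ N → ∀ ⦃x : A.carrier⦄, x ∈ A.grading k → φ x = 0
  apply_d : ∀ x, φ (A.d x) = 0
  apply_fundamental : φ ν = 1

variable {N : ℕ} {ν : A.carrier}

theorem exists_detectingForm (hν : ν ∈ A.grading N) (hnz : ¬ A.IsCoboundary ν) :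
    Nonempty (DetectingForm A N ν) := by
  obtain ⟨ψ, hψd, hψν⟩ := LinearMap.exists_extend_of_notMem (K := ℚ)
    (0 : LinearMap.range A.d →ₗ[ℚ] ℚ) (show ν ∉ LinearMap.range A.d from hnz) 1
  have hψ (x : A.carrier) : ψ (A.d x) = 0 := by
    simpa using LinearMap.congr_fun hψd ⟨A.d x, x, rfl⟩
  refine ⟨ψ ∘ₗ A.proj N, fun k hk x hx => ?_, fun x => ?_, ?_⟩
  · simp [proj_of_mem_of_ne hx hk]
  · cases N with
    | zero => simp [proj_zero_d]
    | succ M => simp [proj_succ_d, hψ]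
  · simp [proj_of_mem hν, hψν]

namespace DetectingForm

variable (ε : DetectingForm A N ν)

theorem apply_mul_eq_zero {i j : ℕ} {x y : A.carrier} (hx : x ∈ A.grading i)
    (hy : y ∈ A.grading j) (hij : i + j ≠ N) : ε.φ (x * y) = 0 :=
  ε.eq_zero_of_mem_grading hij (A.mul_mem hx hy)

theorem apply_proj_mul {j k : ℕ} {y : A.carrier} (hy : y ∈ A.grading j) (hkj : k + j = N)
    (x : A.carrier) : ε.φ (A.proj k x * y) = ε.φ (x * y) := by
  induction x using induction_on_homogeneous with
  | zero => simp
  | add a b ha hb => simp only [map_add, add_mul, ha, hb]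
  | mem i a ha =>
    rcases eq_or_ne i k with rfl | hik
    · rw [proj_of_mem ha]
    · rw [proj_of_mem_of_ne ha hik, zero_mul, map_zero, ε.apply_mul_eq_zero ha hy (by omega)]

theorem apply_d_mul {i : ℕ} {z : A.carrier} (hz : z ∈ A.grading i) (y : A.carrier) :
    ε.φ (A.d z * y) = (-1) ^ (i + 1) * ε.φ (z * A.d y) := by
  have h := ε.apply_d (z * y)
  rw [A.leibniz hz, map_add, map_smul, smul_eq_mul] at h
  rw [pow_succ]
  linear_combination h

def orth : Submodule ℚ A.carrier := LinearMap.ker ((LinearMap.mul ℚ A.carrier).compr₂ ε.φ)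

theorem mem_orth_iff {x : A.carrier} : x ∈ ε.orth ↔ ∀ y, ε.φ (x * y) = 0 := by
  simp [orth, LinearMap.ext_iff]

theorem mul_mem_orth {x : A.carrier} (hx : x ∈ ε.orth) (z : A.carrier) : x * z ∈ ε.orth := by
  rw [mem_orth_iff] at hx ⊢
  intro y
  rw [mul_assoc]
  exact hx _

theorem mem_orth_of_mem_grading {i : ℕ} {x : A.carrier} (hx : x ∈ A.grading i)
    (h : ∀ j, i + j = N → ∀ u ∈ A.grading j, ε.φ (x * u) = 0) : x ∈ ε.orth := by
  rw [mem_orth_iff]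
  intro y
  induction y using induction_on_homogeneous with
  | zero => simp
  | add a b ha hb => rw [mul_add, map_add, ha, hb, add_zero]
  | mem j a ha =>
    by_cases hij : i + j = N
    · exact h j hij a ha
    · exact ε.apply_mul_eq_zero hx ha hij

theorem proj_mem_orth {x : A.carrier} (hx : x ∈ ε.orth) (k : ℕ) : A.proj k x ∈ ε.orth :=
  ε.mem_orth_of_mem_grading (proj_mem k x) fun _ hkj _ hu => by
    rw [ε.apply_proj_mul hu hkj]
    exact (ε.mem_orth_iff.1 hx) _

/-- The largest differential ideal on which `φ` vanishes. -/
def dgOrth : Submodule ℚ A.carrier := ε.orth ⊓ ε.orth.comap A.d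

theorem apply_eq_zero_of_mem_dgOrth {x : A.carrier} (hx : x ∈ ε.dgOrth) : ε.φ x = 0 := by
  simpa using ε.mem_orth_iff.1 hx.1 1

theorem d_mem_dgOrth_iff {x : A.carrier} : A.d x ∈ ε.dgOrth ↔ A.d x ∈ ε.orth :=
  ⟨And.left, fun h => ⟨h, show A.d (A.d x) ∈ ε.orth by rw [A.d_sq]; exact zero_mem _⟩⟩

theorem d_mem_dgOrth {x : A.carrier} (hx : x ∈ ε.dgOrth) : A.d x ∈ ε.dgOrth :=
  ε.d_mem_dgOrth_iff.2 hx.2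

theorem proj_mem_dgOrth {x : A.carrier} (hx : x ∈ ε.dgOrth) (k : ℕ) : A.proj k x ∈ ε.dgOrth := by
  refine ⟨ε.proj_mem_orth hx.1 k, ?_⟩
  show A.d (A.proj k x) ∈ ε.orth
  rw [← proj_succ_d]
  exact ε.proj_mem_orth hx.2 _

theorem mul_mem_dgOrth_right {x : A.carrier} (hx : x ∈ ε.dgOrth) (z : A.carrier) :
    x * z ∈ ε.dgOrth := by
  refine induction_on_proj (p := fun y => y * z ∈ ε.dgOrth) x (by simp)
    (fun a b ha hb => by rw [add_mul]; exact add_mem ha hb) fun k => ?_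
  obtain ⟨hxo, hdxo⟩ := ε.proj_mem_dgOrth hx k
  refine ⟨ε.mul_mem_orth hxo z, ?_⟩
  show A.d (A.proj k x * z) ∈ ε.orth
  rw [A.leibniz (proj_mem k x)]
  exact add_mem (ε.mul_mem_orth hdxo z) (Submodule.smul_mem _ _ (ε.mul_mem_orth hxo _))

theorem mul_mem_dgOrth_left {x : A.carrier} (hx : x ∈ ε.dgOrth) (z : A.carrier) :
    z * x ∈ ε.dgOrth := by
  refine induction_on_proj (p := fun y => z * y ∈ ε.dgOrth) x (by simp)
    (fun a b ha hb => by rw [mul_add]; exact add_mem ha hb) fun k => ?_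
  induction z using induction_on_homogeneous with
  | zero => simp
  | add a b ha hb => rw [add_mul]; exact add_mem ha hb
  | mem j a ha =>
    rw [A.gcomm ha (proj_mem k x)]
    exact Submodule.smul_mem _ _ (ε.mul_mem_dgOrth_right (ε.proj_mem_dgOrth hx k) a)

theorem mem_dgOrth_of_lt {k : ℕ} {x : A.carrier} (hx : x ∈ A.grading k) (hk : N < k) :
    x ∈ ε.dgOrth :=
  ⟨ε.mem_orth_of_mem_grading hx fun _ _ => by omega,
    ε.mem_orth_of_mem_grading (A.d_deg hx) fun _ _ => by omega⟩

theorem sub_smul_mem_dgOrth (hν : ν ∈ A.grading N) {x : A.carrier} (hx : x ∈ A.grading N) :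
    x - ε.φ x • ν ∈ ε.dgOrth := by
  have hxν : x - ε.φ x • ν ∈ A.grading N := sub_mem hx (Submodule.smul_mem _ _ hν)
  refine ⟨ε.mem_orth_of_mem_grading hxν fun j hj u hu => ?_,
    ε.mem_orth_of_mem_grading (A.d_deg hxν) fun _ _ => by omega⟩
  obtain ⟨q, rfl⟩ := A.connected u (by rwa [show j = 0 by omega] at hu)
  simp [ε.apply_fundamental]

def orthIdeal : DGIdeal A where
  toSubmodule := ε.dgOrth
  mul_mem_left z _ hx := ε.mul_mem_dgOrth_left hx z
  mul_mem_right z _ hx := ε.mul_mem_dgOrth_right hx z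
  d_mem := ε.d_mem_dgOrth
  proj_mem k _ hx := ε.proj_mem_dgOrth hx k

theorem eq_zero_of_apply_mul_fundamental_eq_zero {x : A.carrier} (hx : x ∈ A.grading 0)
    (h : ε.φ (x * ν) = 0) : x = 0 := by
  obtain ⟨q, rfl⟩ := A.connected x hx
  simp only [smul_mul_assoc, one_mul, map_smul, ε.apply_fundamental, smul_eq_mul, mul_one] at h
  rw [h, zero_smul]

theorem exists_d_sub_mem_dgOrth_of_mem_grading_succ {i j : ℕ} [FiniteDimensional ℚ (A.grading i)]
    {x : A.carrier} (hx : x ∈ A.grading (i + 1)) (hij : i + 1 + j = N) (hdx : A.d x ∈ ε.orth)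
    (h : ∀ y ∈ A.grading j, A.d y ∈ ε.orth → ε.φ (x * y) = 0) :
    ∃ z, A.d z - x ∈ ε.dgOrth := by
  let pairing := (LinearMap.mul ℚ A.carrier).compr₂ ε.φ
  let Λ : A.grading i →ₗ[ℚ] Module.Dual ℚ (A.grading j) :=
    pairing.compl₂ (A.d ∘ₗ (A.grading j).subtype) ∘ₗ (A.grading i).subtype
  obtain ⟨⟨z, hz⟩, hzx⟩ : pairing x ∘ₗ (A.grading j).subtype ∈ LinearMap.range Λ := by
    refine LinearMap.mem_range_of_iInf_ker_le_ker fun y hy => h y y.2 ?_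
    refine ε.mem_orth_of_mem_grading (A.d_deg y.2) fun m hm u hu => ?_
    have hu' : u ∈ A.grading i := by rwa [show m = i by omega] at hu
    have hΛ : ε.φ (u * A.d y) = 0 := (Submodule.mem_iInf _).1 hy ⟨u, hu'⟩
    rw [A.gcomm (A.d_deg y.2) hu', map_smul, hΛ, smul_zero]
  have hzx' (y : A.carrier) (hy : y ∈ A.grading j) : ε.φ (z * A.d y) = ε.φ (x * y) :=
    LinearMap.congr_fun hzx ⟨y, hy⟩
  have hsign : ((-1 : ℚ) ^ (i + 1)) * (-1) ^ (i + 1) = 1 := by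
    rw [← mul_pow]; norm_num
  refine ⟨(-1 : ℚ) ^ (i + 1) • z, ?_, ?_⟩
  · refine ε.mem_orth_of_mem_grading (sub_mem (A.d_deg (Submodule.smul_mem _ _ hz)) hx)
      fun m hm u hu => ?_
    have hu' : u ∈ A.grading j := by rwa [show m = j by omega] at hu
    rw [map_smul, sub_mul, smul_mul_assoc, map_sub, map_smul, ε.apply_d_mul hz, smul_eq_mul,
      ← mul_assoc, hsign, one_mul, hzx' u hu', sub_self]
  · show A.d (A.d ((-1 : ℚ) ^ (i + 1) • z) - x) ∈ ε.orth
    rw [map_sub, A.d_sq, zero_sub]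
    exact neg_mem hdx

theorem exists_d_sub_mem_dgOrth (hft : ∀ k, FiniteDimensional ℚ (A.grading k))
    (hν : ν ∈ A.grading N) (hc : A.d ν = 0) {k : ℕ} {x : A.carrier} (hx : x ∈ A.grading k)
    (hk : k ≤ N) (hdx : A.d x ∈ ε.orth)
    (h : ∀ y ∈ A.grading (N - k), A.d y ∈ ε.orth → ε.φ (x * y) = 0) :
    ∃ z, A.d z - x ∈ ε.dgOrth := by
  cases k with
  | zero =>
    have hx0 := ε.eq_zero_of_apply_mul_fundamental_eq_zero hx
      (h ν hν (by rw [hc]; exact zero_mem _))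
    exact ⟨0, by simp [hx0]⟩
  | succ i => exact ε.exists_d_sub_mem_dgOrth_of_mem_grading_succ hx (by omega) hdx h

theorem apply_eq_zero_of_isCoboundary_mkₐ {a : A.carrier}
    (h : ε.orthIdeal.quotient.IsCoboundary (ε.orthIdeal.mkₐ a)) : ε.φ a = 0 := by
  obtain ⟨y, hy⟩ := (ε.orthIdeal.isCoboundary_mkₐ_iff a).1 h
  have := ε.apply_eq_zero_of_mem_dgOrth hy
  rwa [map_sub, ε.apply_d, zero_sub, neg_eq_zero] at this

theorem poincareDuality_quotient (hft : ∀ k, FiniteDimensional ℚ (A.grading k))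
    (hν : ν ∈ A.grading N) (hc : A.d ν = 0) :
    PoincareDuality ε.orthIdeal.quotient N (ε.orthIdeal.mkₐ ν) where
  mem := ⟨ν, hν, rfl⟩
  cocycle := by
    show ε.orthIdeal.mkₐ (A.d ν) = 0
    rw [hc, map_zero]
  not_bdry hν' := by
    simpa [ε.apply_fundamental] using ε.apply_eq_zero_of_isCoboundary_mkₐ hν'
  top_vanish := by
    rintro k hk _ ⟨x, hx, rfl⟩ -
    exact ⟨0, (map_zero _).trans
      ((ε.orthIdeal.mkₐ_eq_zero_iff).2 (ε.mem_dgOrth_of_lt hx hk)).symm⟩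
  top_span := by
    rintro _ ⟨x, hx, rfl⟩ -
    refine ⟨ε.φ x, 0, (map_zero _).trans ?_⟩
    have h := (ε.orthIdeal.mkₐ_eq_zero_iff).2 (ε.sub_smul_mem_dgOrth hν hx)
    rw [map_sub, map_smul] at h
    exact h.symm
  nondeg := by
    rintro k hk _ ⟨x, hx, rfl⟩ hdx hncob
    by_contra! hdeg
    refine hncob ((ε.orthIdeal.isCoboundary_mkₐ_iff x).2 ?_)
    refine ε.exists_d_sub_mem_dgOrth hft hν hc hx hk ((ε.orthIdeal.mkₐ_eq_zero_iff).1 hdx).1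
      fun y hy hdy => ε.apply_eq_zero_of_isCoboundary_mkₐ ?_
    rw [map_mul]
    exact hdeg _ ⟨y, hy, rfl⟩ ((ε.orthIdeal.mkₐ_eq_zero_iff).2 (ε.d_mem_dgOrth_iff.2 hdy))

end DetectingForm

end ConnectedDGA

theorem class_detected_by_poincare_duality_dga_general (A : ConnectedDGA)
    (hft : ∀ k, FiniteDimensional ℚ (A.grading k))
    (N : ℕ) (ν : A.carrier) (hν : ν ∈ A.grading N) (hc : A.d ν = 0)
    (hnz : ¬ A.IsCoboundary ν) :
    ∃ (B : ConnectedDGA) (μ : B.carrier) (q : Hom A B),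
      PoincareDuality B N μ ∧ ¬ B.IsCoboundary (q.toFun ν) ∧
      ∃ c : ℚ, c ≠ 0 ∧ B.IsCoboundary (q.toFun ν - c • μ) := by
  obtain ⟨ε⟩ := ConnectedDGA.exists_detectingForm hν hnz
  have hpd := ε.poincareDuality_quotient hft hν hc
  exact ⟨_, _, ε.orthIdeal.mkHom, hpd, hpd.not_bdry, 1, one_ne_zero, 0,
    (map_zero _).trans (sub_eq_zero_of_eq (one_smul ℚ _).symm).symm⟩

/-- any nonzero cohomology class `[ν] ∈ H^N` of a simply-connected finite type
dga, `N ≥ 4`, is detected by a dga with Poincaré duality cohomology of formal dimension `N`: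
there are such `(B,d)` and a dga morphism `q : A → B` with `H^N(q)([ν]) ≠ 0`, a nonzero
multiple of the fundamental class. -/
theorem class_detected_by_poincare_duality_dga (A : ConnectedDGA)
    (hsc : A.grading 1 = ⊥) (hft : ∀ k, FiniteDimensional ℚ (A.grading k))
    (N : ℕ) (hN : 4 ≤ N) (ν : A.carrier) (hν : ν ∈ A.grading N) (hc : A.d ν = 0)
    (hnz : ¬ A.IsCoboundary ν) :
    ∃ (B : ConnectedDGA) (μ : B.carrier) (q : Hom A B),
      PoincareDuality B N μ ∧ ¬ B.IsCoboundary (q.toFun ν) ∧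
      ∃ c : ℚ, c ≠ 0 ∧ B.IsCoboundary (q.toFun ν - c • μ) :=
  class_detected_by_poincare_duality_dga_general A hft N ν hν hc hnz
end

section
/- Every 2-step Sullivan algebra admits a positive weight. Explicitly: let V = V1 ⊕ V2 be a graded ℚ-vector space concentrated in positive degrees, let ΛV be the free graded-commutative ℚ-algebra on V, and let d be a differential making (ΛV,d) a dga with d(V1) = 0 and d(V2) ⊆ ΛV1. Then declaring each degree-homogeneous element x of V1 to be homogeneous of weight |x| and each degree-homogeneous element y of V2 to be homogeneous of weight |y|+1, and extending multiplicatively to monomials, defines a positive weight on (ΛV,d). -/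
/-- `A` is free graded-commutative on the positively graded subspace `V`: universal property
of the free graded-commutative algebra. -/
def IsFreeGCA (A : GradedCommAlg) (V : ℕ → Submodule ℚ A.carrier) : Prop :=
  (∀ k, V k ≤ A.grading k) ∧ V 0 = ⊥ ∧
  ∀ (B : GradedCommAlg) (f : A.carrier →ₗ[ℚ] B.carrier),
    (∀ k, ∀ x ∈ V k, f x ∈ B.grading k) →
    ∃! g : A.carrier →ₐ[ℚ] B.carrier,
      (∀ (k : ℕ) (x : A.carrier), x ∈ A.grading k → g x ∈ B.grading k) ∧
      (∀ k, ∀ x ∈ V k, g x = f x)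

section ModularLattice

variable {α ι κ : Type*} [CompleteLattice α] [IsModularLattice α]

theorem iSupIndep.inf_iSup_eq_iSup_fiber {G : ι → α} (hG : iSupIndep G) {F : κ → α}
    (π : κ → ι) (hF : ∀ c, F c ≤ G (π c)) (i : ι) :
    G i ⊓ ⨆ c, F c = ⨆ (c) (_ : π c = i), F c := by
  have hfiber : (⨆ (c) (_ : π c = i), F c) ≤ G i := iSup₂_le fun c hc => hc ▸ hF c
  have hsplit : (⨆ c, F c) = (⨆ (c) (_ : π c = i), F c) ⊔ ⨆ (c) (_ : π c ≠ i), F c := by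
    refine le_antisymm (iSup_le fun c => ?_) (sup_le (iSup₂_le fun c _ => le_iSup F c)
      (iSup₂_le fun c _ => le_iSup F c))
    by_cases hc : π c = i
    · exact le_sup_of_le_left (le_iSup₂_of_le c hc le_rfl)
    · exact le_sup_of_le_right (le_iSup₂_of_le c hc le_rfl)
  have hrest : G i ⊓ ⨆ (c) (_ : π c ≠ i), F c = ⊥ :=
    (hG i).mono_right (iSup₂_le fun c hc => le_iSup₂_of_le (π c) hc (hF c)) |>.eq_bot
  rw [hsplit, inf_comm, sup_inf_assoc_of_le _ hfiber, inf_comm, hrest, sup_bot_eq]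

theorem iSupIndep.inf_prod {G : ι → α} {H : κ → α} (hG : iSupIndep G) (hH : iSupIndep H) :
    iSupIndep fun c : ι × κ => G c.1 ⊓ H c.2 := by
  rintro ⟨i, j⟩
  set X := ⨆ (j') (_ : j' ≠ j), G i ⊓ H j'
  set Y := ⨆ (c : ι × κ) (_ : c.1 ≠ i), G c.1 ⊓ H c.2
  have hX : X ≤ G i := iSup₂_le fun _ _ => inf_le_left
  have hY : G i ⊓ Y = ⊥ :=
    (hG i).mono_right (iSup₂_le fun c hc => le_iSup₂_of_le c.1 hc inf_le_left) |>.eq_bot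
  have hrest : (⨆ (c : ι × κ) (_ : c ≠ (i, j)), G c.1 ⊓ H c.2) ≤ X ⊔ Y := by
    refine iSup₂_le fun ⟨i', j'⟩ hc => ?_
    by_cases hi : i' = i
    · subst hi
      exact le_sup_of_le_left (le_iSup₂_of_le j' (fun h => hc (by rw [h])) le_rfl)
    · exact le_sup_of_le_right (le_iSup₂_of_le (i', j') hi le_rfl)
  have hGX : G i ⊓ (X ⊔ Y) = X := by
    rw [inf_comm, sup_inf_assoc_of_le _ hX, inf_comm, hY, sup_bot_eq]
  refine Disjoint.mono_right hrest (disjoint_iff.mpr (le_bot_iff.mp ?_))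
  calc G i ⊓ H j ⊓ (X ⊔ Y) = H j ⊓ (G i ⊓ (X ⊔ Y)) := by rw [inf_comm (G i), inf_assoc]
    _ = H j ⊓ X := by rw [hGX]
    _ ≤ H j ⊓ ⨆ (j') (_ : j' ≠ j), H j' := inf_le_inf_left _ (iSup₂_mono fun _ _ => inf_le_right)
    _ = ⊥ := (hH j).eq_bot

end ModularLattice

section LinearExtension

variable {K V W ι : Type*} [Field K] [AddCommGroup V] [Module K V] [AddCommGroup W] [Module K W]

theorem iSupIndep.exists_linearMap_eqOn {N : ι → Submodule K V} (hN : iSupIndep N)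
    (g : ι → V →ₗ[K] W) : ∃ F : V →ₗ[K] W, ∀ i, ∀ x ∈ N i, F x = g i x := by
  classical
  obtain ⟨L, hL⟩ := LinearMap.exists_leftInverse_of_injective
    (DFinsupp.lsum ℕ fun i => (N i).subtype) (LinearMap.ker_eq_bot.mpr hN.dfinsupp_lsum_injective)
  refine ⟨(DFinsupp.lsum ℕ fun i => g i ∘ₗ (N i).subtype) ∘ₗ L, fun i x hx => ?_⟩
  have hsingle : (DFinsupp.lsum ℕ fun i => (N i).subtype) (DFinsupp.single i ⟨x, hx⟩) = x := by
    simp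
  rw [LinearMap.comp_apply, ← hsingle, ← LinearMap.comp_apply L, hL]
  simp

theorem Disjoint.exists_linearMap_smul_smul {p q : Submodule K V} (h : Disjoint p q) (a b : K) :
    ∃ F : V →ₗ[K] V, (∀ x ∈ p, F x = a • x) ∧ ∀ y ∈ q, F y = b • y := by
  obtain ⟨F, hF⟩ := (iSupIndep_pair (i := false) (j := true) (t := fun c => cond c q p)
    Bool.false_ne_true (by decide)).mpr h |>.exists_linearMap_eqOn
    fun c => cond c b a • LinearMap.id
  exact ⟨F, hF false, hF true⟩

theorem iSupIndep.exists_linearMap_smul_smul {G : ι → Submodule K V} (hG : iSupIndep G)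
    {p q : ι → Submodule K V} (hp : ∀ i, p i ≤ G i) (hq : ∀ i, q i ≤ G i)
    (hpq : ∀ i, Disjoint (p i) (q i)) (a b : ι → K) :
    ∃ F : V →ₗ[K] V, (∀ i, ∀ x ∈ p i, F x = a i • x) ∧ ∀ i, ∀ y ∈ q i, F y = b i • y := by
  choose g hgp hgq using fun i => (hpq i).exists_linearMap_smul_smul (a i) (b i)
  obtain ⟨F, hF⟩ := hG.exists_linearMap_eqOn g
  exact ⟨F, fun i x hx => (hF i x (hp i hx)).trans (hgp i x hx),
    fun i y hy => (hF i y (hq i hy)).trans (hgq i y hy)⟩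

end LinearExtension

theorem iSupIndep.comap_of_injective {R M N ι : Type*} [Ring R] [AddCommGroup M] [Module R M]
    [AddCommGroup N] [Module R N] {G : ι → Submodule R N} (hG : iSupIndep G) {f : M →ₗ[R] N}
    (hf : Function.Injective f) : iSupIndep fun i => (G i).comap f := by
  intro i
  rw [disjoint_iff, eq_bot_iff]
  calc (G i).comap f ⊓ ⨆ (j) (_ : j ≠ i), (G j).comap f
      ≤ (G i ⊓ ⨆ (j) (_ : j ≠ i), G j).comap f := by
        rw [Submodule.comap_inf]
        exact inf_le_inf_left _
          (iSup₂_le fun j hj => Submodule.comap_mono (le_iSup₂_of_le j hj le_rfl))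
    _ = ⊥ := by rw [(hG i).eq_bot, Submodule.comap_bot, LinearMap.ker_eq_bot.mpr hf]

namespace GradedCommAlg

variable (A : GradedCommAlg)

theorem exists_mem_grading_of_mem_closure {s : Set A.carrier}
    (hs : ∀ x ∈ s, ∃ k, x ∈ A.grading k) {m : A.carrier} (hm : m ∈ Submonoid.closure s) :
    ∃ k, m ∈ A.grading k := by
  induction hm using Submonoid.closure_induction with
  | mem x hx => exact hs x hx
  | one => exact ⟨0, A.one_mem⟩
  | mul x y _ _ hx hy =>
    obtain ⟨⟨i, hx⟩, ⟨j, hy⟩⟩ := And.intro hx hy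
    exact ⟨i + j, A.mul_mem hx hy⟩

def adjoin (s : Set A.carrier) (hs : ∀ x ∈ s, ∃ k, x ∈ A.grading k) : GradedCommAlg where
  carrier := Algebra.adjoin ℚ s
  grading k := (A.grading k).comap (Algebra.adjoin ℚ s).val.toLinearMap
  internal := by
    set S := Algebra.adjoin ℚ s
    refine DirectSum.isInternal_submodule_of_iSupIndep_of_iSup_eq_top
      (A.internal.submodule_iSupIndep.comap_of_injective Subtype.val_injective) ?_
    have hS : Subalgebra.toSubmodule S ≤
        (⨆ k, (A.grading k).comap S.val.toLinearMap).map S.val.toLinearMap := by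
      rw [Algebra.adjoin_eq_span, Submodule.span_le]
      intro m hm
      obtain ⟨k, hk⟩ := A.exists_mem_grading_of_mem_closure hs hm
      have hmS : m ∈ S := Submonoid.closure_le.mpr Algebra.subset_adjoin hm
      exact ⟨⟨m, hmS⟩, Submodule.mem_iSup_of_mem k hk, rfl⟩
    refine eq_top_iff.mpr fun a _ => ?_
    obtain ⟨b, hb, hba⟩ := hS a.2
    rwa [← Subtype.ext hba]
  one_mem := A.one_mem
  mul_mem hx hy := A.mul_mem hx hy
  gcomm hx hy := Subtype.ext (A.gcomm hx hy)

end GradedCommAlg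

theorem IsFreeGCA.adjoin_eq_top {A : GradedCommAlg} {V : ℕ → Submodule ℚ A.carrier}
    (hV : IsFreeGCA A V) : Algebra.adjoin ℚ (⋃ k, (V k : Set A.carrier)) = ⊤ := by
  obtain ⟨hVA, -, hUP⟩ := hV
  set s := ⋃ k, (V k : Set A.carrier)
  have hs : ∀ x ∈ s, ∃ k, x ∈ A.grading k := by
    simp only [s, Set.mem_iUnion]
    rintro x ⟨k, hx⟩
    exact ⟨k, hVA k hx⟩
  set S := Algebra.adjoin ℚ s
  let incl : Submodule.span ℚ s →ₗ[ℚ] S :=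
    { toFun x := ⟨x, Algebra.span_le_adjoin ℚ s x.2⟩
      map_add' _ _ := rfl
      map_smul' _ _ := rfl }
  obtain ⟨f, hf⟩ := LinearMap.exists_extend incl
  have hfV : ∀ k, ∀ x ∈ V k, (f x : A.carrier) = x := fun k x hx =>
    congrArg Subtype.val
      (LinearMap.congr_fun hf ⟨x, Submodule.subset_span (Set.mem_iUnion_of_mem k hx)⟩)
  obtain ⟨g, ⟨hg_deg, hgV⟩, -⟩ := hUP (A.adjoin s hs) f fun k x hx => by
    change (f x : A.carrier) ∈ A.grading k
    rw [hfV k x hx]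
    exact hVA k hx
  have hid := (hUP A LinearMap.id fun k x hx => hVA k hx).unique
    (y₁ := S.val.comp g) (y₂ := AlgHom.id ℚ A.carrier)
    ⟨fun k x hx => hg_deg k x hx,
      fun k x hx => (congrArg Subtype.val (hgV k x hx)).trans (hfV k x hx)⟩
    ⟨fun k x hx => hx, fun k x _ => rfl⟩
  refine eq_top_iff.mpr fun a _ => ?_
  rw [← AlgHom.id_apply (R := ℚ) a, ← hid]
  exact (g a).2

def degreeEqWeight : AddSubmonoid (ℕ × ℤ) where
  carrier := {c | (c.1 : ℤ) = c.2}
  add_mem' {a b} (ha : (a.1 : ℤ) = a.2) (hb : (b.1 : ℤ) = b.2) :=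
    show ((a.1 + b.1 : ℕ) : ℤ) = a.2 + b.2 by omega
  zero_mem' := rfl

def degreeLeWeight : AddSubmonoid (ℕ × ℤ) where
  carrier := {c | (c.1 : ℤ) ≤ c.2}
  add_mem' {a b} (ha : (a.1 : ℤ) ≤ a.2) (hb : (b.1 : ℤ) ≤ b.2) :=
    show ((a.1 + b.1 : ℕ) : ℤ) ≤ a.2 + b.2 by omega
  zero_mem' := le_refl (0 : ℤ)

namespace GradedCommAlg

variable {A : GradedCommAlg} (σ : A.carrier →ₐ[ℚ] A.carrier)

def weightSpace (k : ℕ) (n : ℤ) : Submodule ℚ A.carrier :=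
  A.grading k ⊓ Module.End.eigenspace σ.toLinearMap ((2 : ℚ) ^ n)

variable {σ} in
theorem mem_weightSpace {k : ℕ} {n : ℤ} {x : A.carrier} :
    x ∈ weightSpace σ k n ↔ x ∈ A.grading k ∧ σ x = (2 : ℚ) ^ n • x :=
  Iff.and Iff.rfl Module.End.mem_eigenspace_iff

theorem one_mem_weightSpace : (1 : A.carrier) ∈ weightSpace σ 0 0 :=
  mem_weightSpace.mpr ⟨A.one_mem, by simp⟩

theorem mul_mem_weightSpace {k l : ℕ} {n m : ℤ} {x y : A.carrier} (hx : x ∈ weightSpace σ k n)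
    (hy : y ∈ weightSpace σ l m) : x * y ∈ weightSpace σ (k + l) (n + m) := by
  rw [mem_weightSpace] at *
  refine ⟨A.mul_mem hx.1 hy.1, ?_⟩
  rw [map_mul, hx.2, hy.2, smul_mul_smul_comm, zpow_add₀ two_ne_zero]

theorem iSupIndep_eigenspace_two_zpow :
    iSupIndep fun n : ℤ => Module.End.eigenspace σ.toLinearMap ((2 : ℚ) ^ n) :=
  (Module.End.eigenspaces_iSupIndep σ.toLinearMap).comp
    (zpow_right_injective₀ two_pos (by norm_num))

theorem iSupIndep_weightSpace : iSupIndep fun c : ℕ × ℤ => weightSpace σ c.1 c.2 :=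
  A.internal.submodule_iSupIndep.inf_prod (iSupIndep_eigenspace_two_zpow σ)

theorem exists_mem_weightSpace_of_mem_closure (P : AddSubmonoid (ℕ × ℤ)) {s : Set A.carrier}
    (hs : ∀ x ∈ s, ∃ c ∈ P, x ∈ weightSpace σ c.1 c.2) {m : A.carrier}
    (hm : m ∈ Submonoid.closure s) : ∃ c ∈ P, m ∈ weightSpace σ c.1 c.2 := by
  induction hm using Submonoid.closure_induction with
  | mem x hx => exact hs x hx
  | one => exact ⟨0, P.zero_mem, one_mem_weightSpace σ⟩
  | mul x y _ _ hx hy =>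
    obtain ⟨⟨c, hcP, hx⟩, ⟨c', hc'P, hy⟩⟩ := And.intro hx hy
    exact ⟨c + c', P.add_mem hcP hc'P, mul_mem_weightSpace σ hx hy⟩

theorem adjoin_le_iSup_weightSpace (P : AddSubmonoid (ℕ × ℤ)) {s : Set A.carrier}
    (hs : ∀ x ∈ s, ∃ c ∈ P, x ∈ weightSpace σ c.1 c.2) :
    Subalgebra.toSubmodule (Algebra.adjoin ℚ s) ≤ ⨆ c : P, weightSpace σ c.1.1 c.1.2 := by
  rw [Algebra.adjoin_eq_span, Submodule.span_le]
  intro m hm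
  obtain ⟨c, hcP, hmc⟩ := exists_mem_weightSpace_of_mem_closure σ P hs hm
  exact Submodule.mem_iSup_of_mem (⟨c, hcP⟩ : P) hmc

theorem iSup_weightSpace_eq_top (P : AddSubmonoid (ℕ × ℤ)) {s : Set A.carrier}
    (hgen : Algebra.adjoin ℚ s = ⊤) (hs : ∀ x ∈ s, ∃ c ∈ P, x ∈ weightSpace σ c.1 c.2) :
    ⨆ c : P, weightSpace σ c.1.1 c.1.2 = ⊤ := by
  rw [eq_top_iff, ← Algebra.toSubmodule_eq_top.mpr hgen]
  exact adjoin_le_iSup_weightSpace σ P hs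

theorem mem_weightSpace_of_mem_adjoin {s : Set A.carrier}
    (hs : ∀ x ∈ s, ∃ k, x ∈ weightSpace σ k k) {k : ℕ} {a : A.carrier}
    (ha : a ∈ Algebra.adjoin ℚ s) (hk : a ∈ A.grading k) : a ∈ weightSpace σ k k := by
  have hsum := adjoin_le_iSup_weightSpace σ degreeEqWeight
    (fun x hx => let ⟨k, hk⟩ := hs x hx; ⟨(k, k), rfl, hk⟩) ha
  have hfiber := A.internal.submodule_iSupIndep.inf_iSup_eq_iSup_fiber
    (F := fun c : degreeEqWeight => weightSpace σ c.1.1 c.1.2) (fun c => c.1.1)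
    (fun _ => inf_le_left) k
  have hle : (⨆ (c : degreeEqWeight) (_ : c.1.1 = k), weightSpace σ c.1.1 c.1.2) ≤
      weightSpace σ k k := by
    refine iSup₂_le fun ⟨⟨k', n⟩, hc⟩ hk' => ?_
    obtain rfl : k' = k := hk'
    obtain rfl : (k' : ℤ) = n := hc
    exact le_rfl
  exact hle (hfiber ▸ ⟨hk, hsum⟩)

end GradedCommAlg

theorem IsFreeGCA.adjoin_iUnion_union_eq_top {A : GradedCommAlg}
    {V1 V2 : ℕ → Submodule ℚ A.carrier} (hfree : IsFreeGCA A fun k => V1 k ⊔ V2 k) :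
    Algebra.adjoin ℚ ((⋃ k, (V1 k : Set A.carrier)) ∪ ⋃ k, (V2 k : Set A.carrier)) = ⊤ := by
  refine eq_top_iff.mpr (hfree.adjoin_eq_top ▸ Algebra.adjoin_le (Set.iUnion_subset fun k => ?_))
  intro x hx
  obtain ⟨y, hy, z, hz, rfl⟩ := Submodule.mem_sup.mp hx
  exact add_mem (Algebra.subset_adjoin (Or.inl (Set.mem_iUnion_of_mem k hy)))
    (Algebra.subset_adjoin (Or.inr (Set.mem_iUnion_of_mem k hz)))

open GradedCommAlg in
theorem IsFreeGCA.exists_algHom_mem_weightSpace {A : GradedCommAlg}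
    {V1 V2 : ℕ → Submodule ℚ A.carrier} (hfree : IsFreeGCA A fun k => V1 k ⊔ V2 k)
    (hdisj : ∀ k, Disjoint (V1 k) (V2 k)) (a b : ℕ → ℤ) :
    ∃ σ : A.carrier →ₐ[ℚ] A.carrier, (∀ k, ∀ x ∈ V1 k, x ∈ A.weightSpace σ k (a k)) ∧
      ∀ k, ∀ y ∈ V2 k, y ∈ A.weightSpace σ k (b k) := by
  have hV1 k : V1 k ≤ A.grading k := le_sup_left.trans (hfree.1 k)
  have hV2 k : V2 k ≤ A.grading k := le_sup_right.trans (hfree.1 k)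
  obtain ⟨f, hf1, hf2⟩ := A.internal.submodule_iSupIndep.exists_linearMap_smul_smul hV1 hV2 hdisj
    (fun k => (2 : ℚ) ^ a k) (fun k => (2 : ℚ) ^ b k)
  obtain ⟨σ, ⟨-, hσf⟩, -⟩ := hfree.2.2 A f fun k x hx => by
    obtain ⟨y, hy, z, hz, rfl⟩ := Submodule.mem_sup.mp hx
    rw [map_add, hf1 k y hy, hf2 k z hz]
    exact add_mem (Submodule.smul_mem _ _ (hV1 k hy)) (Submodule.smul_mem _ _ (hV2 k hz))
  refine ⟨σ, fun k x hx => mem_weightSpace.mpr ⟨hV1 k hx, ?_⟩,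
    fun k y hy => mem_weightSpace.mpr ⟨hV2 k hy, ?_⟩⟩
  · rw [hσf k x (Submodule.mem_sup_left hx), hf1 k x hx]
  · rw [hσf k y (Submodule.mem_sup_right hy), hf2 k y hy]

namespace ConnectedDGA

open GradedCommAlg

variable (A : ConnectedDGA)

theorem d_one : A.d 1 = 0 := by
  have h := A.leibniz (y := (1 : A.carrier)) A.one_mem
  simp only [mul_one, one_mul, pow_zero, one_smul] at h
  exact left_eq_add.mp h

variable {A} (σ : A.carrier →ₐ[ℚ] A.carrier)

theorem d_mem_weightSpace (hσd : ∀ a, σ (A.d a) = A.d (σ a)) {k : ℕ} {n : ℤ} {x : A.carrier}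
    (hx : x ∈ A.weightSpace σ k n) : A.d x ∈ A.weightSpace σ (k + 1) n := by
  rw [mem_weightSpace] at *
  exact ⟨A.d_deg hx.1, by rw [hσd, hx.2, map_smul]⟩

theorem commute_d_of_adjoin_eq_top {s : Set A.carrier} (hgen : Algebra.adjoin ℚ s = ⊤)
    (hs : ∀ x ∈ s, ∃ c : ℕ × ℤ, x ∈ A.weightSpace σ c.1 c.2)
    (hsd : ∀ x ∈ s, σ (A.d x) = A.d (σ x)) (a : A.carrier) : σ (A.d a) = A.d (σ a) := by
  have ha : a ∈ Submodule.span ℚ (Submonoid.closure s : Set A.carrier) := by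
    rw [← Algebra.adjoin_eq_span, hgen]
    trivial
  induction ha using Submodule.span_induction with
  | mem m hm =>
    induction hm using Submonoid.closure_induction with
    | mem x hx => exact hsd x hx
    | one => rw [A.d_one, map_zero, map_one, A.d_one]
    | mul x y hx _ hdx hdy =>
      obtain ⟨⟨i, n⟩, -, hxin⟩ := exists_mem_weightSpace_of_mem_closure σ ⊤
        (fun x hx => (hs x hx).imp fun c hc => ⟨trivial, hc⟩) hx
      obtain ⟨hxi, hσx⟩ := mem_weightSpace.mp hxin
      have hσxi : σ x ∈ A.grading i := by rw [hσx]; exact Submodule.smul_mem _ _ hxi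
      rw [A.leibniz hxi, map_mul, A.leibniz hσxi, map_add, map_smul, map_mul, map_mul, hdx, hdy]
  | zero => simp
  | add x y _ _ hx hy => rw [map_add, map_add, hx, hy, map_add, map_add]
  | smul q x _ hx => rw [map_smul, map_smul, hx, map_smul, map_smul]

theorem commute_d_of_twoStep {V1 V2 : ℕ → Submodule ℚ A.carrier}
    (hgen : Algebra.adjoin ℚ ((⋃ k, (V1 k : Set A.carrier)) ∪ ⋃ k, (V2 k : Set A.carrier)) = ⊤)
    (hσ1 : ∀ k, ∀ x ∈ V1 k, x ∈ A.weightSpace σ k k)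
    (hσ2 : ∀ k, ∀ y ∈ V2 k, y ∈ A.weightSpace σ k (k + 1))
    (hdV1 : ∀ k, ∀ x ∈ V1 k, A.d x = 0)
    (hdV2 : ∀ k, ∀ y ∈ V2 k, A.d y ∈ Algebra.adjoin ℚ (⋃ k, (V1 k : Set A.carrier)))
    (a : A.carrier) : σ (A.d a) = A.d (σ a) := by
  refine commute_d_of_adjoin_eq_top σ hgen ?_ ?_ a
  · rintro x (hx | hx) <;> obtain ⟨k, hx⟩ := Set.mem_iUnion.mp hx
    exacts [⟨(k, k), hσ1 k x hx⟩, ⟨(k, k + 1), hσ2 k x hx⟩]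
  rintro x (hx | hx) <;> obtain ⟨k, hx⟩ := Set.mem_iUnion.mp hx
  · rw [hdV1 k x hx, (mem_weightSpace.mp (hσ1 k x hx)).2, map_smul, hdV1 k x hx, map_zero,
      smul_zero]
  · have hx' := mem_weightSpace.mp (hσ2 k x hx)
    have hdx : A.d x ∈ A.weightSpace σ (k + 1) (k + 1) :=
      mem_weightSpace_of_mem_adjoin σ
        (fun y hy => (Set.mem_iUnion.mp hy).imp fun j hy => hσ1 j y hy) (hdV2 k x hx)
        (A.d_deg hx'.1)
    rw [(mem_weightSpace.mp hdx).2, hx'.2, map_smul]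

end ConnectedDGA

namespace Weight

open GradedCommAlg

variable {A : ConnectedDGA} (σ : A.carrier →ₐ[ℚ] A.carrier)

def ofAlgHom (hσd : ∀ a, σ (A.d a) = A.d (σ a))
    (hspan : ⨆ c : ℕ × ℤ, A.weightSpace σ c.1 c.2 = ⊤) : Weight A where
  w := A.weightSpace σ
  internal := DirectSum.isInternal_submodule_of_iSupIndep_of_iSup_eq_top
    (iSupIndep_weightSpace σ) hspan
  grading_eq k := by
    refine le_antisymm ?_ (iSup_le fun n => inf_le_left)
    have hfiber := A.internal.submodule_iSupIndep.inf_iSup_eq_iSup_fiber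
      (F := fun c : ℕ × ℤ => A.weightSpace σ c.1 c.2) Prod.fst (fun _ => inf_le_left) k
    rw [hspan, inf_top_eq] at hfiber
    rw [hfiber]
    exact iSup₂_le fun c hc => hc ▸ le_iSup (A.weightSpace σ c.1) c.2
  d_mem := ConnectedDGA.d_mem_weightSpace σ hσd
  mul_mem := mul_mem_weightSpace σ

variable {σ}

theorem mem_piece_ofAlgHom {hσd hspan} {k : ℕ} {n : ℤ} {x : A.carrier}
    (hx : x ∈ A.weightSpace σ k n) : x ∈ (ofAlgHom σ hσd hspan).piece n :=
  Submodule.mem_iSup_of_mem k hx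

theorem eigenspace_eq_iSup_weightSpace
    (hpos : ⨆ c : degreeLeWeight, A.weightSpace σ c.1.1 c.1.2 = ⊤) (n : ℤ) :
    Module.End.eigenspace σ.toLinearMap ((2 : ℚ) ^ n) =
      ⨆ (c : degreeLeWeight) (_ : c.1.2 = n), A.weightSpace σ c.1.1 c.1.2 := by
  have hfiber := (iSupIndep_eigenspace_two_zpow σ).inf_iSup_eq_iSup_fiber
    (F := fun c : degreeLeWeight => A.weightSpace σ c.1.1 c.1.2) (fun c => c.1.2)
    (fun _ => inf_le_right) n
  rwa [hpos, inf_top_eq] at hfiber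

theorem positive_ofAlgHom {hσd hspan}
    (hpos : ⨆ c : degreeLeWeight, A.weightSpace σ c.1.1 c.1.2 = ⊤) :
    (ofAlgHom σ hσd hspan).Positive := by
  have hpiece : ∀ n, (ofAlgHom σ hσd hspan).piece n ≤
      Module.End.eigenspace σ.toLinearMap ((2 : ℚ) ^ n) := fun n =>
    iSup_le fun _ => inf_le_right
  refine ⟨fun n hn => eq_bot_iff.mpr ((hpiece n).trans ?_), le_antisymm ((hpiece 0).trans ?_) ?_⟩
  · rw [eigenspace_eq_iSup_weightSpace hpos]
    refine iSup₂_le fun ⟨c, hc⟩ hcn => ?_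
    have : (c.1 : ℤ) ≤ c.2 := hc
    simp only at hcn
    omega
  · rw [eigenspace_eq_iSup_weightSpace hpos]
    refine iSup₂_le fun ⟨⟨k, n⟩, hc⟩ hn => ?_
    obtain rfl : k = 0 := by
      have : (k : ℤ) ≤ n := hc
      simp only at hn
      omega
    exact inf_le_left
  · intro x hx
    obtain ⟨q, rfl⟩ := A.connected x hx
    refine mem_piece_ofAlgHom (k := 0) (mem_weightSpace.mpr ⟨hx, ?_⟩)
    rw [map_smul, map_one, zpow_zero, one_smul]

end Weight

/-- every 2-step Sullivan algebra `(Λ(V1 ⊕ V2), d)` with `d(V1) = 0` and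
`d(V2) ⊆ ΛV1` admits a positive weight, given on generators by `ω(x) = |x|` for `x ∈ V1`
and `ω(y) = |y| + 1` for `y ∈ V2`, extended multiplicatively. -/
theorem two_step_sullivan_has_positive_weight (A : ConnectedDGA)
    (V1 V2 : ℕ → Submodule ℚ A.carrier)
    (hfree : IsFreeGCA A.toGradedCommAlg (fun k => V1 k ⊔ V2 k))
    (hdisj : ∀ k, Disjoint (V1 k) (V2 k))
    (hdV1 : ∀ k, ∀ x ∈ V1 k, A.d x = 0)
    (hdV2 : ∀ k, ∀ y ∈ V2 k, A.d y ∈ Algebra.adjoin ℚ (⋃ k, (V1 k : Set A.carrier))) :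
    ∃ W : Weight A, W.Positive ∧
      (∀ k : ℕ, ∀ x ∈ V1 k, x ∈ W.piece (k : ℤ)) ∧
      (∀ k : ℕ, ∀ y ∈ V2 k, y ∈ W.piece ((k : ℤ) + 1)) := by
  obtain ⟨σ, hσ1, hσ2⟩ := hfree.exists_algHom_mem_weightSpace hdisj (fun k => k) (fun k => k + 1)
  have hgen := hfree.adjoin_iUnion_union_eq_top
  have hσd := ConnectedDGA.commute_d_of_twoStep σ hgen hσ1 hσ2 hdV1 hdV2
  have hpos : ⨆ c : degreeLeWeight, A.weightSpace σ c.1.1 c.1.2 = ⊤ := by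
    refine GradedCommAlg.iSup_weightSpace_eq_top σ degreeLeWeight hgen ?_
    rintro x (hx | hx) <;> obtain ⟨k, hx⟩ := Set.mem_iUnion.mp hx
    exacts [⟨(k, k), le_refl (k : ℤ), hσ1 k x hx⟩,
      ⟨(k, k + 1), show (k : ℤ) ≤ k + 1 by omega, hσ2 k x hx⟩]
  have hspan : ⨆ c : ℕ × ℤ, A.weightSpace σ c.1 c.2 = ⊤ :=
    eq_top_iff.mpr (hpos ▸ iSup_le fun c => le_iSup (fun c : ℕ × ℤ => A.weightSpace σ c.1 c.2) c.1)
  exact ⟨Weight.ofAlgHom σ hσd hspan, Weight.positive_ofAlgHom hpos,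
    fun k x hx => Weight.mem_piece_ofAlgHom (hσ1 k x hx),
    fun k y hy => Weight.mem_piece_ofAlgHom (hσ2 k y hy)⟩
end

section
/- In M₍₂₎ = Λ(x1,x2,y1,y2,y3), the element Z = x1^16·y2y3 + 5·x1^15·x2·y1y3 − 5·x1^14·x2^2·y1y2 does not belong to the ideal generated by γ and x2^12. -/
/-- `M` is the free graded-commutative dga `Λ(x1,x2,y1,y2,y3)` with `|x1| = 8`, `|x2| = 10`,
`|y1| = 33`, `|y2| = 35`, `|y3| = 37`, `dx1 = dx2 = 0`, `dy1 = x1³x2`, `dy2 = x1²x2²`,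
`dy3 = x1x2³`, freeness being expressed by the universal property of the free
graded-commutative algebra on these five generators. -/
def FreeAL (M : ConnectedDGA) (x1 x2 y1 y2 y3 : M.carrier) : Prop :=
  x1 ∈ M.grading 8 ∧ x2 ∈ M.grading 10 ∧ y1 ∈ M.grading 33 ∧ y2 ∈ M.grading 35 ∧
  y3 ∈ M.grading 37 ∧
  M.d x1 = 0 ∧ M.d x2 = 0 ∧ M.d y1 = x1 ^ 3 * x2 ∧ M.d y2 = x1 ^ 2 * x2 ^ 2 ∧
  M.d y3 = x1 * x2 ^ 3 ∧
  ∀ (B : GradedCommAlg) (a1 a2 b1 b2 b3 : B.carrier),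
    a1 ∈ B.grading 8 → a2 ∈ B.grading 10 → b1 ∈ B.grading 33 → b2 ∈ B.grading 35 →
    b3 ∈ B.grading 37 →
    ∃! g : M.carrier →ₐ[ℚ] B.carrier,
      (∀ (k : ℕ) (x : M.carrier), x ∈ M.grading k → g x ∈ B.grading k) ∧
      g x1 = a1 ∧ g x2 = a2 ∧ g y1 = b1 ∧ g y2 = b2 ∧ g y3 = b3

/-!
The freeness of `M₍₂₎` gives an algebra map to any graded-commutative algebra with elements in
degrees 8, 10, 33, 35, 37. Take `ℚ[x₁, x₂] ⊗ Λ(e₁, e₂, e₃)/(e₁e₂e₃)` with `|x₁| = 8`,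
`|x₂| = 10`, `|e₁| = 33`, `|e₂| = 35`, `|e₃| = 37`, and send `xᵢ ↦ xᵢ`, `yᵢ ↦ eᵢ`. The ideal
generated by `γ` and `x₂¹²` maps into the left ideal generated by their images. If
`Z = aγ + b x₂¹²` there, the `e₂e₃`- and `e₁e₂`-coefficients read `a₀x₁² + b₂₃x₂¹² = x₁¹⁶` and
`a₀x₂² + b₁₂x₂¹² = -5x₁¹⁴x₂²`; eliminating `a₀` puts `6x₁¹⁶x₂²` in the ideal `(x₂¹²)` of
`ℚ[x₁, x₂]`, which is absurd.
-/

open DirectSum MvPolynomial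

section ShiftGrading

variable {R M : Type*} [Semiring R] [AddCommMonoid M] [Module R M]

def shiftGrading (𝒜 : ℕ → Submodule R M) (s k : ℕ) : Submodule R M :=
  if s ≤ k then 𝒜 (k - s) else ⊥

variable {𝒜 : ℕ → Submodule R M}

@[simp] theorem shiftGrading_zero : shiftGrading 𝒜 0 = 𝒜 := by
  ext k : 1
  simp [shiftGrading]

@[simp] theorem shiftGrading_self (s : ℕ) : shiftGrading 𝒜 s s = 𝒜 0 := by
  simp [shiftGrading]

theorem eq_zero_of_mem_shiftGrading_of_odd (hodd : ∀ n, Odd n → 𝒜 n = ⊥) {s k : ℕ} {a : M}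
    (ha : a ∈ shiftGrading 𝒜 s k) (hsk : Odd (s + k)) : a = 0 := by
  unfold shiftGrading at ha
  split_ifs at ha with h
  · obtain ⟨m, hm⟩ := hsk
    rwa [hodd (k - s) ⟨m - s, by omega⟩, Submodule.mem_bot] at ha
  · rwa [Submodule.mem_bot] at ha

end ShiftGrading

theorem mul_mem_shiftGrading {R A : Type*} [CommSemiring R] [Semiring A] [Algebra R A]
    {𝒜 : ℕ → Submodule R A} [SetLike.GradedMul 𝒜] {s t u i j : ℕ} {a b : A}
    (ha : a ∈ shiftGrading 𝒜 s i) (hb : b ∈ shiftGrading 𝒜 t j) (hu : s + t = u) :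
    a * b ∈ shiftGrading 𝒜 u (i + j) := by
  subst hu
  unfold shiftGrading at *
  split_ifs at ha hb with hi hj
  · rw [if_pos (by omega)]
    have := SetLike.GradedMul.mul_mem ha hb
    rwa [show i - s + (j - t) = i + j - (s + t) by omega] at this
  all_goals simp_all

namespace DirectSum.IsInternal

variable {ι R M N : Type*} [DecidableEq ι] [Ring R] [AddCommGroup M] [Module R M]
  [AddCommGroup N] [Module R N]

theorem comap_linearEquiv {𝒜 : ι → Submodule R M} (h : IsInternal 𝒜) (e : N ≃ₗ[R] M) :
    IsInternal fun i => (𝒜 i).comap (e : N →ₗ[R] M) := by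
  rw [isInternal_submodule_iff_iSupIndep_and_iSup_eq_top] at h ⊢
  let φ := (Submodule.orderIsoMapComap e).symm
  exact ⟨h.1.map_orderIso φ, by simpa [φ, h.2] using (φ.map_iSup 𝒜).symm⟩

theorem submodule_pi {J : Type*} [Fintype J] [DecidableEq J] {𝒜 : J → ι → Submodule R M}
    (h : ∀ j, IsInternal (𝒜 j)) : IsInternal fun i => Submodule.pi Set.univ fun j => 𝒜 j i := by
  simp only [isInternal_submodule_iff_iSupIndep_and_iSup_eq_top] at h ⊢
  refine ⟨fun i => Submodule.disjoint_def.2 fun x hx hx' => funext fun j => ?_, ?_⟩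
  · have hproj : (⨆ (i') (_ : i' ≠ i), Submodule.pi Set.univ fun j => 𝒜 j i').map
        (LinearMap.proj j) ≤ ⨆ (i') (_ : i' ≠ i), 𝒜 j i' := by
      simp only [Submodule.map_iSup]
      exact iSup₂_mono fun i' _ => Submodule.map_le_iff_le_comap.2 fun y hy => hy j trivial
    exact Submodule.disjoint_def.1 ((h j).1 i) _ (hx j trivial)
      (hproj (Submodule.mem_map_of_mem hx'))
  · rw [eq_top_iff]
    rintro x -
    rw [← Finset.univ_sum_single x]
    refine sum_mem fun j _ => ?_
    have hsingle : (⨆ i, 𝒜 j i).map (LinearMap.single R (fun _ => M) j) ≤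
        ⨆ i, Submodule.pi Set.univ fun j => 𝒜 j i := by
      rw [Submodule.map_iSup]
      refine iSup_mono fun i => Submodule.map_le_iff_le_comap.2 fun y hy j' _ => ?_
      rcases eq_or_ne j' j with rfl | hj
      · simpa using hy
      · simp [hj]
    exact hsingle (Submodule.mem_map_of_mem ((h j).2 ▸ Submodule.mem_top))

theorem shiftGrading {𝒜 : ℕ → Submodule R M} (h : IsInternal 𝒜) (s : ℕ) :
    IsInternal (shiftGrading 𝒜 s) := by
  rw [isInternal_submodule_iff_iSupIndep_and_iSup_eq_top] at h ⊢
  refine ⟨fun k => ?_, ?_⟩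
  · by_cases hk : s ≤ k
    · rw [_root_.shiftGrading, if_pos hk]
      refine (h.1 (k - s)).mono_right (iSup₂_le fun j hj => ?_)
      unfold _root_.shiftGrading
      split_ifs with hsj
      · exact le_iSup₂_of_le (j - s) (by omega) le_rfl
      · exact bot_le
    · rw [_root_.shiftGrading, if_neg hk]
      exact disjoint_bot_left
  · refine eq_top_iff.2 (h.2 ▸ iSup_le fun n => le_iSup_of_le (n + s) ?_)
    rw [_root_.shiftGrading, if_pos (Nat.le_add_left s n), Nat.add_sub_cancel]

end DirectSum.IsInternal

theorem ConnectedDGA.map_mem_span_of_mem_mulIdeal (A : ConnectedDGA) {B : Type*} [Ring B]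
    [Algebra ℚ B] (f : A.carrier →ₐ[ℚ] B) {S : Set A.carrier} {x : A.carrier}
    (hx : x ∈ A.mulIdeal S) : f x ∈ Ideal.span (f '' S) := by
  induction hx using Submodule.span_induction with
  | mem y hy =>
    obtain ⟨r, s, hs, rfl⟩ := hy
    rw [map_mul]
    exact Ideal.mul_mem_left _ _ (Ideal.subset_span ⟨s, hs, rfl⟩)
  | zero => simp
  | add _ _ _ _ h₁ h₂ => simpa using add_mem h₁ h₂
  | smul q y _ h => simpa [Algebra.smul_def] using Ideal.mul_mem_left _ (algebraMap ℚ B q) h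

theorem MvPolynomial.weightedHomogeneousSubmodule_eq_bot_of_odd {σ R : Type*} [CommSemiring R]
    {w : σ → ℕ} (hw : ∀ i, Even (w i)) {n : ℕ} (hn : Odd n) :
    weightedHomogeneousSubmodule R w n = ⊥ := by
  refine eq_bot_iff.2 fun p hp => (Submodule.mem_bot R).2 ?_
  by_contra hp0
  obtain ⟨d, hd⟩ := support_nonempty.2 hp0
  have hweight : Even (Finsupp.weight w d) := by
    rw [Finsupp.weight_apply, Finsupp.sum]
    exact Finset.even_sum _ fun i _ => (hw i).mul_left _
  rw [(mem_weightedHomogeneousSubmodule R w n p).1 hp (mem_support_iff.1 hd)] at hweight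
  exact Nat.not_even_iff_odd.2 hn hweight

/-- `R ⊗ Λ(e₁, e₂, e₃)/(e₁e₂e₃)`: the element `⟨c0, c1, c2, c3, c12, c13, c23⟩` is
`c0 + c1 e₁ + c2 e₂ + c3 e₃ + c12 e₁e₂ + c13 e₁e₃ + c23 e₂e₃`. -/
@[ext] structure TruncExterior (R : Type*) where
  (c0 c1 c2 c3 c12 c13 c23 : R)

namespace TruncExterior

section Ring

variable {R : Type*} [CommRing R]

@[simps] instance : Zero (TruncExterior R) := ⟨⟨0, 0, 0, 0, 0, 0, 0⟩⟩

@[simps] instance : One (TruncExterior R) := ⟨⟨1, 0, 0, 0, 0, 0, 0⟩⟩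

@[simps] instance : Add (TruncExterior R) :=
  ⟨fun x y => ⟨x.c0 + y.c0, x.c1 + y.c1, x.c2 + y.c2, x.c3 + y.c3, x.c12 + y.c12,
    x.c13 + y.c13, x.c23 + y.c23⟩⟩

@[simps] instance : Neg (TruncExterior R) :=
  ⟨fun x => ⟨-x.c0, -x.c1, -x.c2, -x.c3, -x.c12, -x.c13, -x.c23⟩⟩

@[simps] instance : Sub (TruncExterior R) :=
  ⟨fun x y => ⟨x.c0 - y.c0, x.c1 - y.c1, x.c2 - y.c2, x.c3 - y.c3, x.c12 - y.c12,
    x.c13 - y.c13, x.c23 - y.c23⟩⟩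

@[simps] instance {S : Type*} [SMul S R] : SMul S (TruncExterior R) :=
  ⟨fun s x => ⟨s • x.c0, s • x.c1, s • x.c2, s • x.c3, s • x.c12, s • x.c13, s • x.c23⟩⟩

@[simps] instance : Mul (TruncExterior R) :=
  ⟨fun x y => ⟨x.c0 * y.c0,
    x.c0 * y.c1 + x.c1 * y.c0,
    x.c0 * y.c2 + x.c2 * y.c0,
    x.c0 * y.c3 + x.c3 * y.c0,
    x.c0 * y.c12 + x.c12 * y.c0 + (x.c1 * y.c2 - x.c2 * y.c1),
    x.c0 * y.c13 + x.c13 * y.c0 + (x.c1 * y.c3 - x.c3 * y.c1),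
    x.c0 * y.c23 + x.c23 * y.c0 + (x.c2 * y.c3 - x.c3 * y.c2)⟩⟩

instance : AddCommGroup (TruncExterior R) where
  add_assoc x y z := by ext <;> simp [add_assoc]
  zero_add x := by ext <;> simp
  add_zero x := by ext <;> simp
  add_comm x y := by ext <;> simp [add_comm]
  neg_add_cancel x := by ext <;> simp
  sub_eq_add_neg x y := by ext <;> simp [sub_eq_add_neg]
  nsmul n x := n • x
  nsmul_zero x := by ext <;> simp
  nsmul_succ n x := by ext <;> simp <;> ring
  zsmul n x := n • x
  zsmul_zero' x := by ext <;> simp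
  zsmul_succ' n x := by ext <;> simp <;> ring
  zsmul_neg' n x := by ext <;> simp <;> ring

instance : Ring (TruncExterior R) where
  mul_assoc x y z := by ext <;> simp <;> ring
  one_mul x := by ext <;> simp
  mul_one x := by ext <;> simp
  left_distrib x y z := by ext <;> simp <;> ring
  right_distrib x y z := by ext <;> simp <;> ring
  zero_mul x := by ext <;> simp
  mul_zero x := by ext <;> simp

instance {S : Type*} [Semiring S] [Module S R] : Module S (TruncExterior R) where
  one_smul x := by ext <;> simp
  mul_smul s t x := by ext <;> simp [mul_smul]
  smul_zero s := by ext <;> simp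
  smul_add s x y := by ext <;> simp
  add_smul s t x := by ext <;> simp [add_smul]
  zero_smul x := by ext <;> simp

instance {S : Type*} [CommSemiring S] [Algebra S R] : Algebra S (TruncExterior R) :=
  Algebra.ofModule (fun s x y => by ext <;> simp [smul_sub, smul_add])
    (fun s x y => by ext <;> simp [smul_sub, smul_add])

theorem algebraMap_apply (r : R) :
    algebraMap R (TruncExterior R) r = ⟨r, 0, 0, 0, 0, 0, 0⟩ := by
  ext <;> simp [Algebra.algebraMap_eq_smul_one]

def e₁ : TruncExterior R := ⟨0, 1, 0, 0, 0, 0, 0⟩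
def e₂ : TruncExterior R := ⟨0, 0, 1, 0, 0, 0, 0⟩
def e₃ : TruncExterior R := ⟨0, 0, 0, 1, 0, 0, 0⟩

end Ring

section Grading

variable {R S : Type*} [CommRing R] [CommRing S] [Algebra S R]

def linearEquivPi : TruncExterior R ≃ₗ[S] (Fin 7 → R) where
  toFun x := ![x.c0, x.c1, x.c2, x.c3, x.c12, x.c13, x.c23]
  invFun f := ⟨f 0, f 1, f 2, f 3, f 4, f 5, f 6⟩
  map_add' x y := by ext i; fin_cases i <;> simp
  map_smul' s x := by ext i; fin_cases i <;> simp
  left_inv x := rfl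
  right_inv f := by ext i; fin_cases i <;> rfl

variable (𝒜 : ℕ → Submodule S R) (d₁ d₂ d₃ : ℕ)

def grading (k : ℕ) : Submodule S (TruncExterior R) :=
  (Submodule.pi Set.univ fun c =>
    shiftGrading 𝒜 (![0, d₁, d₂, d₃, d₁ + d₂, d₁ + d₃, d₂ + d₃] c) k).comap
      (linearEquivPi : TruncExterior R ≃ₗ[S] _).toLinearMap

variable {𝒜 d₁ d₂ d₃}

theorem mem_grading {k : ℕ} {x : TruncExterior R} :
    x ∈ grading 𝒜 d₁ d₂ d₃ k ↔ x.c0 ∈ shiftGrading 𝒜 0 k ∧ x.c1 ∈ shiftGrading 𝒜 d₁ k ∧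
      x.c2 ∈ shiftGrading 𝒜 d₂ k ∧ x.c3 ∈ shiftGrading 𝒜 d₃ k ∧
      x.c12 ∈ shiftGrading 𝒜 (d₁ + d₂) k ∧ x.c13 ∈ shiftGrading 𝒜 (d₁ + d₃) k ∧
      x.c23 ∈ shiftGrading 𝒜 (d₂ + d₃) k := by
  simp [grading, linearEquivPi, Fin.forall_fin_succ, -shiftGrading_zero]

theorem isInternal_grading (h : IsInternal 𝒜) : IsInternal (grading 𝒜 d₁ d₂ d₃) :=
  (IsInternal.submodule_pi fun _ => h.shiftGrading _).comap_linearEquiv linearEquivPi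

theorem algebraMap_mem_grading {n : ℕ} {r : R} (hr : r ∈ 𝒜 n) :
    algebraMap R (TruncExterior R) r ∈ grading 𝒜 d₁ d₂ d₃ n := by
  simp [mem_grading, algebraMap_apply, hr]

theorem one_mem_grading [SetLike.GradedOne 𝒜] :
    (1 : TruncExterior R) ∈ grading 𝒜 d₁ d₂ d₃ 0 := by
  simpa using algebraMap_mem_grading (d₁ := d₁) (d₂ := d₂) (d₃ := d₃) (SetLike.one_mem_graded 𝒜)

theorem e₁_mem_grading [SetLike.GradedOne 𝒜] : e₁ ∈ grading 𝒜 d₁ d₂ d₃ d₁ := by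
  simp [mem_grading, e₁, SetLike.one_mem_graded]

theorem e₂_mem_grading [SetLike.GradedOne 𝒜] : e₂ ∈ grading 𝒜 d₁ d₂ d₃ d₂ := by
  simp [mem_grading, e₂, SetLike.one_mem_graded]

theorem e₃_mem_grading [SetLike.GradedOne 𝒜] : e₃ ∈ grading 𝒜 d₁ d₂ d₃ d₃ := by
  simp [mem_grading, e₃, SetLike.one_mem_graded]

theorem mul_mem_grading [SetLike.GradedMul 𝒜] {i j : ℕ} {x y : TruncExterior R}
    (hx : x ∈ grading 𝒜 d₁ d₂ d₃ i) (hy : y ∈ grading 𝒜 d₁ d₂ d₃ j) :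
    x * y ∈ grading 𝒜 d₁ d₂ d₃ (i + j) := by
  rw [mem_grading] at hx hy ⊢
  obtain ⟨x0, x1, x2, x3, x12, x13, x23⟩ := hx
  obtain ⟨y0, y1, y2, y3, y12, y13, y23⟩ := hy
  refine ⟨mul_mem_shiftGrading x0 y0 rfl, ?_, ?_, ?_, ?_, ?_, ?_⟩
  · exact add_mem (mul_mem_shiftGrading x0 y1 (zero_add _)) (mul_mem_shiftGrading x1 y0 rfl)
  · exact add_mem (mul_mem_shiftGrading x0 y2 (zero_add _)) (mul_mem_shiftGrading x2 y0 rfl)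
  · exact add_mem (mul_mem_shiftGrading x0 y3 (zero_add _)) (mul_mem_shiftGrading x3 y0 rfl)
  · exact add_mem (add_mem (mul_mem_shiftGrading x0 y12 (zero_add _))
      (mul_mem_shiftGrading x12 y0 rfl))
      (sub_mem (mul_mem_shiftGrading x1 y2 rfl) (mul_mem_shiftGrading x2 y1 (add_comm _ _)))
  · exact add_mem (add_mem (mul_mem_shiftGrading x0 y13 (zero_add _))
      (mul_mem_shiftGrading x13 y0 rfl))
      (sub_mem (mul_mem_shiftGrading x1 y3 rfl) (mul_mem_shiftGrading x3 y1 (add_comm _ _)))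
  · exact add_mem (add_mem (mul_mem_shiftGrading x0 y23 (zero_add _))
      (mul_mem_shiftGrading x23 y0 rfl))
      (sub_mem (mul_mem_shiftGrading x2 y3 rfl) (mul_mem_shiftGrading x3 y2 (add_comm _ _)))

theorem odd_coeffs_eq_zero_of_mem_grading_of_even (hodd : ∀ n, Odd n → 𝒜 n = ⊥)
    (hd₁ : Odd d₁) (hd₂ : Odd d₂) (hd₃ : Odd d₃) {k : ℕ} {x : TruncExterior R}
    (hx : x ∈ grading 𝒜 d₁ d₂ d₃ k) (hk : Even k) : x.c1 = 0 ∧ x.c2 = 0 ∧ x.c3 = 0 := by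
  obtain ⟨-, x1, x2, x3, -⟩ := mem_grading.1 hx
  exact ⟨eq_zero_of_mem_shiftGrading_of_odd hodd x1 (hd₁.add_even hk),
    eq_zero_of_mem_shiftGrading_of_odd hodd x2 (hd₂.add_even hk),
    eq_zero_of_mem_shiftGrading_of_odd hodd x3 (hd₃.add_even hk)⟩

theorem even_coeffs_eq_zero_of_mem_grading_of_odd (hodd : ∀ n, Odd n → 𝒜 n = ⊥)
    (hd₁ : Odd d₁) (hd₂ : Odd d₂) (hd₃ : Odd d₃) {k : ℕ} {x : TruncExterior R}
    (hx : x ∈ grading 𝒜 d₁ d₂ d₃ k) (hk : Odd k) :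
    x.c0 = 0 ∧ x.c12 = 0 ∧ x.c13 = 0 ∧ x.c23 = 0 := by
  obtain ⟨x0, -, -, -, x12, x13, x23⟩ := mem_grading.1 hx
  exact ⟨eq_zero_of_mem_shiftGrading_of_odd hodd x0 (by simpa using hk),
    eq_zero_of_mem_shiftGrading_of_odd hodd x12 ((hd₁.add_odd hd₂).add_odd hk),
    eq_zero_of_mem_shiftGrading_of_odd hodd x13 ((hd₁.add_odd hd₃).add_odd hk),
    eq_zero_of_mem_shiftGrading_of_odd hodd x23 ((hd₂.add_odd hd₃).add_odd hk)⟩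

theorem mul_comm_of_mem_grading (hodd : ∀ n, Odd n → 𝒜 n = ⊥) (hd₁ : Odd d₁) (hd₂ : Odd d₂)
    (hd₃ : Odd d₃) {i j : ℕ} {x y : TruncExterior R} (hx : x ∈ grading 𝒜 d₁ d₂ d₃ i)
    (hy : y ∈ grading 𝒜 d₁ d₂ d₃ j) :
    x * y = (-1 : S) ^ (i * j) • (y * x) := by
  rcases Nat.even_or_odd i with hi | hi <;> rcases Nat.even_or_odd j with hj | hj
  · rw [(hi.mul_right j).neg_one_pow, one_smul]
    obtain ⟨x1, x2, x3⟩ := odd_coeffs_eq_zero_of_mem_grading_of_even hodd hd₁ hd₂ hd₃ hx hi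
    obtain ⟨y1, y2, y3⟩ := odd_coeffs_eq_zero_of_mem_grading_of_even hodd hd₁ hd₂ hd₃ hy hj
    ext <;> simp [x1, x2, x3, y1, y2, y3] <;> ring
  · rw [(hi.mul_right j).neg_one_pow, one_smul]
    obtain ⟨x1, x2, x3⟩ := odd_coeffs_eq_zero_of_mem_grading_of_even hodd hd₁ hd₂ hd₃ hx hi
    obtain ⟨y0, y12, y13, y23⟩ :=
      even_coeffs_eq_zero_of_mem_grading_of_odd hodd hd₁ hd₂ hd₃ hy hj
    ext <;> simp [x1, x2, x3, y0, y12, y13, y23] <;> ring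
  · rw [(hj.mul_left i).neg_one_pow, one_smul]
    obtain ⟨x0, x12, x13, x23⟩ :=
      even_coeffs_eq_zero_of_mem_grading_of_odd hodd hd₁ hd₂ hd₃ hx hi
    obtain ⟨y1, y2, y3⟩ := odd_coeffs_eq_zero_of_mem_grading_of_even hodd hd₁ hd₂ hd₃ hy hj
    ext <;> simp [x0, x12, x13, x23, y1, y2, y3] <;> ring
  · rw [(hi.mul hj).neg_one_pow, neg_one_smul]
    obtain ⟨x0, x12, x13, x23⟩ :=
      even_coeffs_eq_zero_of_mem_grading_of_odd hodd hd₁ hd₂ hd₃ hx hi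
    obtain ⟨y0, y12, y13, y23⟩ :=
      even_coeffs_eq_zero_of_mem_grading_of_odd hodd hd₁ hd₂ hd₃ hy hj
    ext <;> simp [x0, x12, x13, x23, y0, y12, y13, y23] <;> ring

end Grading

def gradedCommAlg {R : Type} [CommRing R] [Algebra ℚ R] (𝒜 : ℕ → Submodule ℚ R)
    [GradedAlgebra 𝒜] (hodd : ∀ n, Odd n → 𝒜 n = ⊥) (d₁ d₂ d₃ : ℕ) (hd₁ : Odd d₁)
    (hd₂ : Odd d₂) (hd₃ : Odd d₃) : GradedCommAlg where
  carrier := TruncExterior R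
  grading := grading 𝒜 d₁ d₂ d₃
  internal := isInternal_grading (Decomposition.isInternal 𝒜)
  one_mem := one_mem_grading
  mul_mem := mul_mem_grading
  gcomm := mul_comm_of_mem_grading hodd hd₁ hd₂ hd₃

end TruncExterior

noncomputable section

namespace Model

attribute [local instance] MvPolynomial.weightedGradedAlgebra

abbrev P := MvPolynomial (Fin 2) ℚ

def x₁ : TruncExterior P := algebraMap P _ (X 0)
def x₂ : TruncExterior P := algebraMap P _ (X 1)

def alg : GradedCommAlg :=
  TruncExterior.gradedCommAlg (weightedHomogeneousSubmodule ℚ ![8, 10])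
    (fun _ => weightedHomogeneousSubmodule_eq_bot_of_odd (by simp [Fin.forall_fin_two]; decide))
    33 35 37 (by decide) (by decide) (by decide)

theorem x₁_mem : x₁ ∈ alg.grading 8 :=
  TruncExterior.algebraMap_mem_grading (by simpa using isWeightedHomogeneous_X ℚ ![8, 10] 0)

theorem x₂_mem : x₂ ∈ alg.grading 10 :=
  TruncExterior.algebraMap_mem_grading (by simpa using isWeightedHomogeneous_X ℚ ![8, 10] 1)

theorem e₁_mem : (TruncExterior.e₁ : TruncExterior P) ∈ alg.grading 33 :=
  TruncExterior.e₁_mem_grading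

theorem e₂_mem : (TruncExterior.e₂ : TruncExterior P) ∈ alg.grading 35 :=
  TruncExterior.e₂_mem_grading

theorem e₃_mem : (TruncExterior.e₃ : TruncExterior P) ∈ alg.grading 37 :=
  TruncExterior.e₃_mem_grading

open TruncExterior in
theorem notMem_ideal_span :
    x₁ ^ 16 * (e₂ * e₃) + (5 : ℚ) • (x₁ ^ 15 * x₂ * (e₁ * e₃)) -
        (5 : ℚ) • (x₁ ^ 14 * x₂ ^ 2 * (e₁ * e₂)) ∉
      Ideal.span {x₁ ^ 2 * (e₂ * e₃) - x₁ * x₂ * (e₁ * e₃) + x₂ ^ 2 * (e₁ * e₂), x₂ ^ 12} := by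
  rw [Ideal.mem_span_pair]
  rintro ⟨a, b, hab⟩
  have h12 := congrArg c12 hab
  have h23 := congrArg c23 hab
  simp only [x₁, x₂, ← map_pow] at h12 h23
  simp [TruncExterior.algebraMap_apply, e₁, e₂, e₃, smul_eq_C_mul, map_ofNat] at h12 h23
  have hdvd : X 1 ^ 12 ∣ (6 : P) * (X 0 ^ 16 * X 1 ^ 2) :=
    ⟨X 1 ^ 2 * b.c23 - X 0 ^ 2 * b.c12, by linear_combination X 0 ^ 2 * h12 - X 1 ^ 2 * h23⟩
  have hmon : (6 : P) * (X 0 ^ 16 * X 1 ^ 2) =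
      monomial (Finsupp.single 0 16 + Finsupp.single 1 2) 6 := by
    rw [X_pow_eq_monomial, X_pow_eq_monomial, monomial_mul, one_mul, ← map_ofNat C 6,
      C_mul_monomial, mul_one]
  rw [hmon, X_pow_eq_monomial, monomial_dvd_monomial] at hdvd
  obtain ⟨h6 | hle, -⟩ := hdvd
  · norm_num at h6
  · simpa using hle 1

end Model

end

/-- in `M₍₂₎ = Λ(x1,x2,y1,y2,y3)`, the element
`Z = x1¹⁶y2y3 + 5x1¹⁵x2y1y3 − 5x1¹⁴x2²y1y2` does not lie in the ideal generated by `γ`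
and `x2¹²`. -/
theorem element_not_in_gamma_x2_ideal
    (M2 : ConnectedDGA) (x1 x2 y1 y2 y3 : M2.carrier)
    (hAL : FreeAL M2 x1 x2 y1 y2 y3) :
    x1 ^ 16 * (y2 * y3) + (5 : ℚ) • (x1 ^ 15 * x2 * (y1 * y3)) -
        (5 : ℚ) • (x1 ^ 14 * x2 ^ 2 * (y1 * y2)) ∉
      M2.mulIdeal
        {x1 ^ 2 * (y2 * y3) - x1 * x2 * (y1 * y3) + x2 ^ 2 * (y1 * y2), x2 ^ 12} := by
  obtain ⟨-, -, -, -, -, -, -, -, -, -, huniv⟩ := hAL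
  obtain ⟨g, ⟨-, hg₁, hg₂, hg₃, hg₄, hg₅⟩, -⟩ := huniv Model.alg Model.x₁ Model.x₂
    TruncExterior.e₁ TruncExterior.e₂ TruncExterior.e₃ Model.x₁_mem Model.x₂_mem Model.e₁_mem
    Model.e₂_mem Model.e₃_mem
  intro hZ
  have hgZ := M2.map_mem_span_of_mem_mulIdeal g hZ
  simp only [Set.image_insert_eq, Set.image_singleton, map_add, map_sub, map_mul, map_pow,
    map_smul, hg₁, hg₂, hg₃, hg₄, hg₅] at hgZ
  exact Model.notMem_ideal_span hgZ
end
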